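/- arXiv:1201.1975 — 4 statements merged into one kernel-verified Lean document; each statement's English description precedes it below -/
import Mathlib

section
/- The improper double integral I₁ = ∫_{-∞}^{∞} ds₁ ∫_{-∞}^{s₁} ds₂ cos(s₁² − s₂²) converges and equals π/2. -/
open Real MeasureTheory Filter Topology intervalIntegral

open FourierTransform

noncomputable section FresnelProofAux

/-- `Gc t = ∫_0^t e^{ix²} dx`. -/
def Gc (t : ℝ) : ℂ := ∫ x in (0:ℝ)..t, Complex.exp (Complex.I * (x:ℂ)^2)

lemma contPhase : Continuous fun x : ℝ => Complex.exp (Complex.I * (x:ℂ)^2) := by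
  fun_prop

lemma hasDerivAt_Gc (t : ℝ) : HasDerivAt Gc (Complex.exp (Complex.I * (t:ℂ)^2)) t :=
  intervalIntegral.integral_hasDerivAt_right (contPhase.intervalIntegrable _ _)
    (contPhase.stronglyMeasurableAtFilter _ _) contPhase.continuousAt

/-- `gc t = ∫_0^1 e^{it²(1+x²)}/(1+x²) dx`. -/
def gc (t : ℝ) : ℂ :=
  ∫ x in (0:ℝ)..1, Complex.exp (Complex.I * (t:ℂ)^2 * (1 + (x:ℂ)^2)) / (1 + (x:ℂ)^2)

lemma gc_zero : gc 0 = Real.pi / 4 := by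
  have : gc 0 = ∫ x in (0:ℝ)..1, ((1 / (1 + x^2) : ℝ) : ℂ) := by
    unfold gc
    refine intervalIntegral.integral_congr fun x _ => ?_
    push_cast
    simp
  rw [this, intervalIntegral.integral_ofReal, integral_one_div_one_add_sq]
  norm_num

lemma one_add_sq_ne (x : ℝ) : (1 + (x:ℂ)^2) ≠ 0 := by
  have : ((1 + x^2 : ℝ) : ℂ) ≠ 0 := by
    exact_mod_cast (by positivity : (1 + x^2 : ℝ) ≠ 0)
  simpa using this

lemma hasDerivAt_gc (t : ℝ) :
    HasDerivAt gc
      (∫ x in (0:ℝ)..1, 2 * Complex.I * (t:ℂ) * Complex.exp (Complex.I * (t:ℂ)^2 * (1 + (x:ℂ)^2))) t := by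
  have key := intervalIntegral.hasDerivAt_integral_of_dominated_loc_of_deriv_le
    (F := fun (s : ℝ) (x : ℝ) => Complex.exp (Complex.I * (s:ℂ)^2 * (1 + (x:ℂ)^2)) / (1 + (x:ℂ)^2))
    (F' := fun (s : ℝ) (x : ℝ) => 2 * Complex.I * (s:ℂ) * Complex.exp (Complex.I * (s:ℂ)^2 * (1 + (x:ℂ)^2)))
    (μ := MeasureTheory.volume) (a := (0:ℝ)) (b := 1) (x₀ := t) (bound := fun _ => 4 * (|t| + 1)) (s := Metric.ball t 1)
    (Metric.ball_mem_nhds t one_pos) ?_ ?_ ?_ ?_ ?_ ?_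
  · exact key.2
  · filter_upwards with s
    apply Continuous.aestronglyMeasurable
    have : Continuous fun x : ℝ => Complex.exp (Complex.I * (s:ℂ)^2 * (1 + (x:ℂ)^2)) := by fun_prop
    exact this.div (by fun_prop) fun x => one_add_sq_ne x
  · apply Continuous.intervalIntegrable
    have : Continuous fun x : ℝ => Complex.exp (Complex.I * (t:ℂ)^2 * (1 + (x:ℂ)^2)) := by fun_prop
    exact this.div (by fun_prop) fun x => one_add_sq_ne x
  · apply Continuous.aestronglyMeasurable; fun_prop
  · filter_upwards with x _ s hs
    have hs' : |s - t| < 1 := by simpa [Real.dist_eq] using hs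
    have hsb : |s| ≤ |t| + 1 := by
      have := abs_sub_abs_le_abs_sub s t
      linarith
    have hnorm : ‖Complex.exp (Complex.I * (s:ℂ)^2 * (1 + (x:ℂ)^2))‖ = 1 := by
      have harg : Complex.I * (s:ℂ)^2 * (1 + (x:ℂ)^2)
          = ((s^2 * (1+x^2) : ℝ) : ℂ) * Complex.I := by push_cast; ring
      rw [harg, Complex.norm_exp_ofReal_mul_I]
    rw [norm_mul, hnorm, mul_one, norm_mul]
    simp only [Complex.norm_real, Real.norm_eq_abs]
    rw [show ‖(2:ℂ) * Complex.I‖ = 2 by simp]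
    nlinarith [abs_nonneg s, abs_nonneg t]
  · apply Continuous.intervalIntegrable; fun_prop
  · filter_upwards with x _ s _
    have h1 : HasDerivAt (fun s : ℝ => Complex.I * (s:ℂ)^2 * (1 + (x:ℂ)^2))
        (Complex.I * (2*(s:ℂ)) * (1 + (x:ℂ)^2)) s := by
      have hs : HasDerivAt (fun s : ℝ => ((s:ℂ)^2)) (2*(s:ℂ)) s := by
        have := (hasDerivAt_pow 2 (s:ℂ)).comp_ofReal
        simpa using this
      have := (hs.const_mul Complex.I).mul_const (1 + (x:ℂ)^2)
      convert this using 1 <;> ring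
    have h2 := (h1.cexp).div_const (1 + (x:ℂ)^2)
    refine h2.congr_deriv ?_
    field_simp [one_add_sq_ne x]

lemma deriv_gc_eq (t : ℝ) :
    (∫ x in (0:ℝ)..1, 2 * Complex.I * (t:ℂ) * Complex.exp (Complex.I * (t:ℂ)^2 * (1 + (x:ℂ)^2)))
      = 2 * Complex.I * Complex.exp (Complex.I * (t:ℂ)^2) * Gc t := by
  rcases eq_or_ne t 0 with rfl | ht
  · simp [Gc]
  · have h1 : ∀ x : ℝ, 2 * Complex.I * (t:ℂ) * Complex.exp (Complex.I * (t:ℂ)^2 * (1 + (x:ℂ)^2))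
        = (2 * Complex.I * (t:ℂ) * Complex.exp (Complex.I * (t:ℂ)^2)) *
          Complex.exp (Complex.I * ((t*x : ℝ):ℂ)^2) := by
      intro x
      rw [mul_assoc (2 * Complex.I * (t:ℂ)), ← Complex.exp_add]
      push_cast
      ring_nf
    simp_rw [h1]
    rw [intervalIntegral.integral_const_mul]
    have h2 : (∫ x in (0:ℝ)..1, Complex.exp (Complex.I * ((t*x : ℝ):ℂ)^2))
        = (t:ℝ)⁻¹ • ∫ y in (0:ℝ)..t, Complex.exp (Complex.I * (y:ℂ)^2) := by
      have := intervalIntegral.integral_comp_mul_left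
        (fun y : ℝ => Complex.exp (Complex.I * (y:ℂ)^2)) ht (a := 0) (b := 1)
      simpa using this
    rw [h2]
    rw [Complex.real_smul]
    rw [show ((∫ y in (0:ℝ)..t, Complex.exp (Complex.I * (y:ℂ)^2)) = Gc t) from rfl]
    have htc : (t:ℂ) ≠ 0 := by exact_mod_cast ht
    push_cast
    field_simp

-- placeholders from earlier chunks



lemma sq_image_Ioc : (fun x : ℝ => x ^ 2) '' Set.Ioc 0 1 = Set.Ioc 0 1 := by
  ext u
  constructor
  · rintro ⟨x, ⟨hx0, hx1⟩, rfl⟩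
    exact ⟨by positivity, by show x^2 ≤ 1; nlinarith⟩
  · rintro ⟨hu0, hu1⟩
    exact ⟨Real.sqrt u, ⟨Real.sqrt_pos.mpr hu0,
      by simpa using Real.sqrt_le_sqrt hu1⟩, Real.sq_sqrt hu0.le⟩

lemma gc_eq_J (t : ℝ) :
    gc t = Complex.exp (Complex.I * (t:ℂ)^2) *
      ∫ v in Set.Ioc (0:ℝ) 1, Complex.exp (Complex.I * (t:ℂ)^2 * (v:ℂ)) *
        ((((1+v)*(2*Real.sqrt v))⁻¹ : ℝ) : ℂ) := by
  have hchg := integral_image_eq_integral_abs_deriv_smul (f := fun x : ℝ => x^2)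
    (f' := fun x : ℝ => 2*x) (s := Set.Ioc (0:ℝ) 1) measurableSet_Ioc
    (fun x _ => ((hasDerivAt_pow 2 x).congr_deriv (by ring)).hasDerivWithinAt)
    (fun a ha b hb h => by
      rcases sq_eq_sq_iff_eq_or_eq_neg.mp h with h' | h'
      · exact h'
      · exfalso; have := ha.1; have := hb.1; linarith)
    (fun u => Complex.exp (Complex.I * (t:ℂ)^2 * ((1:ℂ)+(u:ℂ))) *
        ((((1+u)*(2*Real.sqrt u))⁻¹ : ℝ) : ℂ))
  rw [sq_image_Ioc] at hchg
  have hgc : gc t = ∫ x in Set.Ioc (0:ℝ) 1,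
      Complex.exp (Complex.I * (t:ℂ)^2 * (1 + (x:ℂ)^2)) / (1 + (x:ℂ)^2) := by
    unfold gc
    rw [intervalIntegral.integral_of_le (by norm_num : (0:ℝ) ≤ 1)]
  rw [hgc, ← MeasureTheory.integral_const_mul]
  have step1 : (∫ x in Set.Ioc (0:ℝ) 1,
      Complex.exp (Complex.I * (t:ℂ)^2 * (1 + (x:ℂ)^2)) / (1 + (x:ℂ)^2))
      = ∫ x in Set.Ioc (0:ℝ) 1,
        |2*x| • (Complex.exp (Complex.I * (t:ℂ)^2 * ((1:ℂ)+((x^2:ℝ):ℂ))) *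
          ((((1+x^2)*(2*Real.sqrt (x^2)))⁻¹ : ℝ) : ℂ)) := by
    refine setIntegral_congr_fun measurableSet_Ioc fun x hx => ?_
    have hx0 : 0 < x := hx.1
    have hsq : Real.sqrt (x^2) = x := Real.sqrt_sq hx0.le
    have h1 : ((1:ℝ) + x^2) ≠ 0 := by positivity
    have h1c : ((1:ℂ) + (x:ℂ)^2) ≠ 0 := by
      exact_mod_cast (show ((1+x^2:ℝ):ℂ) ≠ 0 by exact_mod_cast h1)
    have hxne : (x:ℂ) ≠ 0 := by exact_mod_cast hx0.ne'
    rw [Complex.real_smul, hsq, abs_of_pos (by positivity : (0:ℝ) < 2*x)]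
    push_cast
    field_simp
  rw [step1, ← hchg]
  refine setIntegral_congr_fun measurableSet_Ioc fun u hu => ?_
  rw [show Complex.I * (t:ℂ)^2 * (1+(u:ℂ)) = Complex.I*(t:ℂ)^2 + Complex.I*(t:ℂ)^2*(u:ℂ) by ring,
    Complex.exp_add]
  ring

lemma tendsto_J :
    Tendsto (fun t : ℝ => ∫ v in Set.Ioc (0:ℝ) 1,
        Complex.exp (Complex.I * (t:ℂ)^2 * (v:ℂ)) * ((((1+v)*(2*Real.sqrt v))⁻¹ : ℝ) : ℂ))
      atTop (𝓝 0) := by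
  set h : ℝ → ℂ := (Set.Ioc (0:ℝ) 1).indicator
      (fun v => ((((1+v)*(2*Real.sqrt v))⁻¹ : ℝ) : ℂ)) with hh
  have RL := Real.tendsto_integral_exp_smul_cocompact h
  have hw : Tendsto (fun t : ℝ => -(t^2) / (2*π)) atTop (cocompact ℝ) := by
    rw [cocompact_eq_atBot_atTop]
    refine Tendsto.mono_right ?_ le_sup_left
    apply Tendsto.atBot_div_const (by positivity : (0:ℝ) < 2*π)
    exact tendsto_neg_atBot_iff.mpr (tendsto_pow_atTop two_ne_zero)
  have comp := RL.comp hw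
  have : (fun t : ℝ => ∫ v : ℝ, 𝐞 (-(v * (-(t^2) / (2*π)))) • h v)
      = fun t : ℝ => ∫ v in Set.Ioc (0:ℝ) 1,
        Complex.exp (Complex.I * (t:ℂ)^2 * (v:ℂ)) * ((((1+v)*(2*Real.sqrt v))⁻¹ : ℝ) : ℂ) := by
    funext t
    rw [← MeasureTheory.integral_indicator measurableSet_Ioc]
    congr 1
    funext v
    rw [hh]
    by_cases hv : v ∈ Set.Ioc (0:ℝ) 1
    · rw [Set.indicator_of_mem hv, Set.indicator_of_mem hv, Circle.smul_def,
        Real.fourierChar_apply]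
      congr 2
      have hπ : (π : ℝ) ≠ 0 := Real.pi_ne_zero
      have : 2 * π * -(v * (-(t^2) / (2*π))) = t^2 * v := by field_simp
      rw [this]
      push_cast
      ring
    · rw [Set.indicator_of_notMem hv, Set.indicator_of_notMem hv, smul_zero]
  rw [← this]
  exact comp

lemma hasDerivAt_K (t : ℝ) :
    HasDerivAt (fun s => gc s - Complex.I * (Gc s)^2) 0 t := by
  have h1 : HasDerivAt gc (2 * Complex.I * Complex.exp (Complex.I * (t:ℂ)^2) * Gc t) t := by
    have := hasDerivAt_gc t
    rwa [deriv_gc_eq t] at this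
  have h2 : HasDerivAt (fun s => Complex.I * (Gc s * Gc s))
      (Complex.I * (Complex.exp (Complex.I * (t:ℂ)^2) * Gc t +
        Gc t * Complex.exp (Complex.I * (t:ℂ)^2))) t :=
    ((hasDerivAt_Gc t).mul (hasDerivAt_Gc t)).const_mul Complex.I
  have h2' : HasDerivAt (fun s => Complex.I * (Gc s)^2)
      (Complex.I * (Complex.exp (Complex.I * (t:ℂ)^2) * Gc t +
        Gc t * Complex.exp (Complex.I * (t:ℂ)^2))) t := by
    simpa only [sq] using h2
  have := h1.fun_sub h2'
  refine this.congr_deriv ?_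
  ring

lemma gc_eq (t : ℝ) : gc t = (π : ℂ)/4 + Complex.I * (Gc t)^2 := by
  have hK : ∀ x y : ℝ, (gc x - Complex.I * (Gc x)^2) = (gc y - Complex.I * (Gc y)^2) := by
    intro x y
    exact is_const_of_deriv_eq_zero (fun s => (hasDerivAt_K s).differentiableAt)
      (fun s => (hasDerivAt_K s).deriv) x y
  have := hK t 0
  have hG0 : Gc 0 = 0 := by simp [Gc]
  rw [gc_zero, hG0] at this
  simp only [ne_eq, OfNat.ofNat_ne_zero, not_false_eq_true, zero_pow, mul_zero, sub_zero] at this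
  linear_combination this

lemma tendsto_gc : Filter.Tendsto gc Filter.atTop (𝓝 0) := by
  rw [tendsto_zero_iff_norm_tendsto_zero]
  have hnorm : ∀ t : ℝ, ‖gc t‖ = ‖∫ v in Set.Ioc (0:ℝ) 1,
      Complex.exp (Complex.I * (t:ℂ)^2 * (v:ℂ)) * ((((1+v)*(2*Real.sqrt v))⁻¹ : ℝ) : ℂ)‖ := by
    intro t
    rw [gc_eq_J t, norm_mul]
    have h1 : ‖Complex.exp (Complex.I * (t:ℂ)^2)‖ = 1 := by
      rw [show Complex.I * (t:ℂ)^2 = ((t^2:ℝ):ℂ) * Complex.I by push_cast; ring,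
        Complex.norm_exp_ofReal_mul_I]
    rw [h1, one_mul]
  simp_rw [hnorm]
  simpa using tendsto_J.norm

lemma tendsto_absGc_sq : Tendsto (fun t : ℝ => ‖Gc t‖ ^ 2) atTop (𝓝 (π/4)) := by
  have h1 : ∀ t : ℝ, ‖Gc t‖ ^ 2 = ‖gc t - (π:ℂ)/4‖ := by
    intro t
    have : (Gc t)^2 = -Complex.I * (gc t - (π:ℂ)/4) := by
      rw [gc_eq t]; ring_nf; rw [Complex.I_sq]; ring
    calc ‖Gc t‖ ^ 2 = ‖(Gc t)^2‖ := by rw [norm_pow]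
    _ = ‖-Complex.I * (gc t - (π:ℂ)/4)‖ := by rw [this]
    _ = ‖gc t - (π:ℂ)/4‖ := by rw [norm_mul]; simp
  simp_rw [h1]
  have : Tendsto (fun t : ℝ => gc t - (π:ℂ)/4) atTop (𝓝 (0 - (π:ℂ)/4)) :=
    tendsto_gc.sub tendsto_const_nhds
  have h2 := (continuous_norm.tendsto _).comp this
  simp only [zero_sub, Function.comp_def] at h2
  convert h2 using 2
  rw [norm_neg]
  rw [show ((π:ℂ)/4) = ((π/4 : ℝ) : ℂ) by push_cast; ring, Complex.norm_real, Real.norm_eq_abs,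
    abs_of_pos (by positivity)]

def Cr (t : ℝ) : ℝ := ∫ x in (0:ℝ)..t, Real.cos (x^2)
def Sr (t : ℝ) : ℝ := ∫ x in (0:ℝ)..t, Real.sin (x^2)

lemma contC : Continuous fun x : ℝ => Real.cos (x^2) := by fun_prop
lemma contS : Continuous fun x : ℝ => Real.sin (x^2) := by fun_prop

lemma hasDerivAt_Cr (t : ℝ) : HasDerivAt Cr (Real.cos (t^2)) t :=
  intervalIntegral.integral_hasDerivAt_right (contC.intervalIntegrable _ _)
    (contC.stronglyMeasurableAtFilter _ _) contC.continuousAt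

lemma hasDerivAt_Sr (t : ℝ) : HasDerivAt Sr (Real.sin (t^2)) t :=
  intervalIntegral.integral_hasDerivAt_right (contS.intervalIntegrable _ _)
    (contS.stronglyMeasurableAtFilter _ _) contS.continuousAt

lemma Cr_neg (T : ℝ) : Cr (-T) = -Cr T := by
  have h := intervalIntegral.integral_comp_neg (a := 0) (b := T) (fun x : ℝ => Real.cos (x^2))
  simp only [neg_zero, neg_sq] at h
  unfold Cr
  rw [intervalIntegral.integral_symm]
  rw [← h]

lemma Sr_neg (T : ℝ) : Sr (-T) = -Sr T := by
  have h := intervalIntegral.integral_comp_neg (a := 0) (b := T) (fun x : ℝ => Real.sin (x^2))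
  simp only [neg_zero, neg_sq] at h
  unfold Sr
  rw [intervalIntegral.integral_symm]
  rw [← h]

lemma inner_eq (T s₁ : ℝ) :
    (∫ s₂ in (-T)..s₁, Real.cos (s₁ ^ 2 - s₂ ^ 2))
      = Real.cos (s₁^2) * (Cr s₁ + Cr T) + Real.sin (s₁^2) * (Sr s₁ + Sr T) := by
  have h1 : (∫ s₂ in (-T)..s₁, Real.cos (s₁ ^ 2 - s₂ ^ 2))
      = ∫ s₂ in (-T)..s₁,
        (Real.cos (s₁^2) * Real.cos (s₂^2) + Real.sin (s₁^2) * Real.sin (s₂^2)) := by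
    refine intervalIntegral.integral_congr fun x _ => ?_
    rw [Real.cos_sub]
  have i1 : IntervalIntegrable (fun s₂ => Real.cos (s₁^2) * Real.cos (s₂^2)) volume (-T) s₁ :=
    (continuous_const.mul contC).intervalIntegrable _ _
  have i2 : IntervalIntegrable (fun s₂ => Real.sin (s₁^2) * Real.sin (s₂^2)) volume (-T) s₁ :=
    (continuous_const.mul contS).intervalIntegrable _ _
  rw [h1, intervalIntegral.integral_add i1 i2,
    intervalIntegral.integral_const_mul, intervalIntegral.integral_const_mul]
  have hc : (∫ s₂ in (-T)..s₁, Real.cos (s₂^2)) = Cr s₁ + Cr T := by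
    have := intervalIntegral.integral_interval_sub_left (μ := volume)
      (contC.intervalIntegrable (0:ℝ) s₁) (contC.intervalIntegrable (0:ℝ) (-T))
    rw [show (∫ x in (0:ℝ)..s₁, Real.cos (x^2)) = Cr s₁ from rfl,
      show (∫ x in (0:ℝ)..(-T), Real.cos (x^2)) = Cr (-T) from rfl, Cr_neg] at this
    rw [← this]; ring
  have hs : (∫ s₂ in (-T)..s₁, Real.sin (s₂^2)) = Sr s₁ + Sr T := by
    have := intervalIntegral.integral_interval_sub_left (μ := volume)
      (contS.intervalIntegrable (0:ℝ) s₁) (contS.intervalIntegrable (0:ℝ) (-T))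
    rw [show (∫ x in (0:ℝ)..s₁, Real.sin (x^2)) = Sr s₁ from rfl,
      show (∫ x in (0:ℝ)..(-T), Real.sin (x^2)) = Sr (-T) from rfl, Sr_neg] at this
    rw [← this]; ring
  rw [hc, hs]

lemma outer_eq (T : ℝ) :
    (∫ s in (-T)..T, (Real.cos (s^2) * (Cr s + Cr T) + Real.sin (s^2) * (Sr s + Sr T)))
      = 2 * (Cr T ^ 2 + Sr T ^ 2) := by
  set Φ : ℝ → ℝ := fun s => (Cr s)^2/2 + Cr T * Cr s + (Sr s)^2/2 + Sr T * Sr s with hΦ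
  have hderiv : ∀ s ∈ Set.uIcc (-T) T, HasDerivAt Φ
      (Real.cos (s^2) * (Cr s + Cr T) + Real.sin (s^2) * (Sr s + Sr T)) s := by
    intro s _
    have h1 := ((hasDerivAt_Cr s).mul (hasDerivAt_Cr s)).div_const 2
    have h2 := (hasDerivAt_Cr s).const_mul (Cr T)
    have h3 := ((hasDerivAt_Sr s).mul (hasDerivAt_Sr s)).div_const 2
    have h4 := (hasDerivAt_Sr s).const_mul (Sr T)
    have := ((h1.fun_add h2).fun_add h3).fun_add h4
    have heq : HasDerivAt Φ
        ((Real.cos (s^2) * Cr s + Cr s * Real.cos (s^2))/2 + Cr T * Real.cos (s^2)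
          + (Real.sin (s^2) * Sr s + Sr s * Real.sin (s^2))/2 + Sr T * Real.sin (s^2)) s := by
      rw [hΦ]
      exact this.congr_of_eventuallyEq (Filter.Eventually.of_forall fun x => by simp only [Pi.mul_apply]; ring)
    convert heq using 1
    ring
  have hcont : IntervalIntegrable
      (fun s => Real.cos (s^2) * (Cr s + Cr T) + Real.sin (s^2) * (Sr s + Sr T))
      volume (-T) T := by
    apply Continuous.intervalIntegrable
    have hCc : Continuous Cr := by
      have : Differentiable ℝ Cr := fun s => (hasDerivAt_Cr s).differentiableAt
      exact this.continuous
    have hSc : Continuous Sr := by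
      have : Differentiable ℝ Sr := fun s => (hasDerivAt_Sr s).differentiableAt
      exact this.continuous
    exact (contC.mul (hCc.add continuous_const)).add (contS.mul (hSc.add continuous_const))
  rw [intervalIntegral.integral_eq_sub_of_hasDerivAt hderiv hcont]
  rw [hΦ]
  simp only [Cr_neg, Sr_neg]
  ring

lemma Gc_eq (T : ℝ) : Gc T = (Cr T : ℂ) + (Sr T : ℂ) * Complex.I := by
  have h1 : Gc T = ∫ x in (0:ℝ)..T,
      ((Real.cos (x^2) : ℂ) + (Real.sin (x^2) : ℂ) * Complex.I) := by
    unfold Gc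
    refine intervalIntegral.integral_congr fun x _ => ?_
    rw [mul_comm, show ((x:ℂ)^2) = ((x^2 : ℝ) : ℂ) by push_cast; ring, Complex.exp_mul_I]
    rw [← Complex.ofReal_cos, ← Complex.ofReal_sin]
  have i1 : IntervalIntegrable (fun x : ℝ => ((Real.cos (x^2) : ℝ) : ℂ)) volume 0 T :=
    (Complex.continuous_ofReal.comp contC).intervalIntegrable _ _
  have i2 : IntervalIntegrable (fun x : ℝ => ((Real.sin (x^2) : ℝ) : ℂ) * Complex.I) volume 0 T :=
    ((Complex.continuous_ofReal.comp contS).mul continuous_const).intervalIntegrable _ _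
  rw [h1, intervalIntegral.integral_add i1 i2,
    intervalIntegral.integral_mul_const, intervalIntegral.integral_ofReal,
    intervalIntegral.integral_ofReal]
  rfl

lemma absGc_sq (T : ℝ) : ‖Gc T‖ ^ 2 = Cr T ^ 2 + Sr T ^ 2 := by
  rw [Complex.sq_norm, Gc_eq, Complex.normSq_add_mul_I]



end FresnelProofAux

/-- The improper double integral
`I₁ = ∫_{-∞}^{∞} ds₁ ∫_{-∞}^{s₁} ds₂ cos(s₁² − s₂²)`,
understood as the limit as `T → ∞` of the integral over the region
`{(s₁,s₂) : −T ≤ s₂ ≤ s₁ ≤ T}`, converges and equals `π/2`. -/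
theorem I1_eq_pi_div_two :
    Tendsto (fun T : ℝ =>
        ∫ s₁ in (-T)..T, ∫ s₂ in (-T)..s₁, Real.cos (s₁ ^ 2 - s₂ ^ 2))
      atTop (𝓝 (π / 2)) := by
  have key : (fun T : ℝ => ∫ s₁ in (-T)..T, ∫ s₂ in (-T)..s₁, Real.cos (s₁ ^ 2 - s₂ ^ 2))
      = fun T : ℝ => 2 * (Cr T ^ 2 + Sr T ^ 2) := by
    funext T
    rw [show (∫ s₁ in (-T)..T, ∫ s₂ in (-T)..s₁, Real.cos (s₁ ^ 2 - s₂ ^ 2))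
        = ∫ s₁ in (-T)..T,
            (Real.cos (s₁^2) * (Cr s₁ + Cr T) + Real.sin (s₁^2) * (Sr s₁ + Sr T)) from
      intervalIntegral.integral_congr fun s₁ _ => inner_eq T s₁]
    exact outer_eq T
  rw [key]
  have h1 : Tendsto (fun T : ℝ => Cr T ^ 2 + Sr T ^ 2) atTop (𝓝 (π/4)) := by
    have := tendsto_absGc_sq
    simp_rw [absGc_sq] at this
    exact this
  have h2 := h1.const_mul (2 : ℝ)
  convert h2 using 2
  ring
end

section
/- The iterated improper integral ∫₀^{∞} (dx/x) ∫₀^{x} (dy/y) [cos(x − y) − cos x] converges and equals ζ(2) = π²/6. -/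
open Real MeasureTheory Filter Topology intervalIntegral Set

namespace ZT

lemma cos_lip (a b : ℝ) : |Real.cos a - Real.cos b| ≤ |a - b| := by
  rw [Real.cos_sub_cos]
  calc |(-2) * Real.sin ((a + b) / 2) * Real.sin ((a - b) / 2)|
      = 2 * |Real.sin ((a + b) / 2)| * |Real.sin ((a - b) / 2)| := by
        rw [abs_mul, abs_mul]; norm_num
    _ ≤ 2 * 1 * |(a - b) / 2| := by
        have h1 := Real.abs_sin_le_one ((a + b) / 2)
        have h2 := Real.abs_sin_le_abs (x := (a - b) / 2)
        have h3 : (0:ℝ) ≤ |Real.sin ((a - b) / 2)| := abs_nonneg _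
        nlinarith [abs_nonneg (Real.sin ((a+b)/2))]
    _ = |a - b| := by rw [abs_div, abs_two]; ring

lemma one_sub_cos (u : ℝ) : |Real.cos u - 1| ≤ u ^ 2 / 2 := by
  have h := cos_lip u 0
  rw [Real.cos_zero, sub_zero] at h
  -- need sharper: |cos u - 1| ≤ u^2/2
  have : Real.cos u - 1 = -(2 * Real.sin (u / 2) ^ 2) := by
    have h4 : Real.cos (2 * (u / 2)) = 1 - 2 * Real.sin (u / 2) ^ 2 := Real.cos_two_mul' (u/2) ▸ by
      nlinarith [Real.sin_sq_add_cos_sq (u / 2), Real.cos_two_mul' (u/2)]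
    rw [show 2 * (u/2) = u by ring] at h4
    linarith
  rw [this, abs_neg, abs_of_nonneg (by positivity)]
  have h2 : |Real.sin (u / 2)| ≤ |u / 2| := Real.abs_sin_le_abs
  have h3 : Real.sin (u / 2) ^ 2 ≤ (u / 2) ^ 2 := by
    rw [← sq_abs, ← sq_abs (u / 2)]
    exact pow_le_pow_left₀ (abs_nonneg _) h2 2
  nlinarith

lemma contOn_cosdiv : ContinuousOn (fun u : ℝ => Real.cos u / u) {u : ℝ | u ≠ 0} :=
  Real.continuous_cos.continuousOn.div continuous_id.continuousOn fun _ h => h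

lemma uIcc_subset_pos {p q : ℝ} (hp : 0 < p) (hq : 0 < q) :
    uIcc p q ⊆ {u : ℝ | u ≠ 0} := fun u hu =>
  ne_of_gt (lt_of_lt_of_le (lt_min hp hq) hu.1)

lemma ii_cosdiv {p q : ℝ} (hp : 0 < p) (hq : 0 < q) :
    IntervalIntegrable (fun u => Real.cos u / u) volume p q :=
  (contOn_cosdiv.mono (uIcc_subset_pos hp hq)).intervalIntegrable

lemma ii_inv {p q : ℝ} (hp : 0 < p) (hq : 0 < q) :
    IntervalIntegrable (fun u : ℝ => 1 / u) volume p q :=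
  ((continuous_const.continuousOn.div continuous_id.continuousOn
    fun _ h => h).mono (uIcc_subset_pos hp hq)).intervalIntegrable

lemma ii_cosm1 {p q : ℝ} (hp : 0 < p) (hq : 0 < q) :
    IntervalIntegrable (fun u => (Real.cos u - 1) / u) volume p q :=
  (((Real.continuous_cos.sub continuous_const).continuousOn.div
    continuous_id.continuousOn fun _ h => h).mono (uIcc_subset_pos hp hq)).intervalIntegrable

lemma ii_sindiv2 {p q : ℝ} (hp : 0 < p) (hq : 0 < q) :
    IntervalIntegrable (fun u => Real.sin u / u ^ 2) volume p q :=
  ((Real.continuous_sin.continuousOn.div (continuous_pow 2).continuousOn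
    fun u h => pow_ne_zero 2 h).mono (uIcc_subset_pos hp hq)).intervalIntegrable


lemma not_mem_uIcc {p q : ℝ} (hp : 0 < p) (hpq : p ≤ q) : (0:ℝ) ∉ uIcc p q := by
  rw [Set.uIcc_of_le hpq]
  exact fun h => hp.not_ge h.1

lemma C_le_log {p q : ℝ} (hp : 0 < p) (hpq : p ≤ q) :
    |∫ u in p..q, Real.cos u / u| ≤ Real.log q - Real.log p := by
  have hq : 0 < q := hp.trans_le hpq
  have hae : ∀ᵐ t ∂volume.restrict (Set.uIoc p q), ‖Real.cos t / t‖ ≤ 1 / t := by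
    rw [Set.uIoc_of_le hpq]
    filter_upwards [ae_restrict_mem measurableSet_Ioc] with t ht
    have ht0 : 0 < t := hp.trans ht.1
    rw [norm_div, Real.norm_eq_abs, Real.norm_eq_abs, abs_of_pos ht0]
    gcongr
    exact Real.abs_cos_le_one t
  calc |∫ u in p..q, Real.cos u / u| ≤ |∫ u in p..q, 1 / u| :=
        intervalIntegral.norm_integral_le_abs_of_norm_le hae (ii_inv hp hq)
    _ = Real.log q - Real.log p := by
        rw [integral_one_div (not_mem_uIcc hp hpq), Real.log_div hq.ne' hp.ne',
          abs_of_nonneg]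
        have : (1:ℝ) ≤ q / p := (one_le_div hp).2 hpq
        have := Real.log_nonneg this
        rw [Real.log_div hq.ne' hp.ne'] at this
        linarith

lemma Cm1_le {p q : ℝ} (hp : 0 < p) (hpq : p ≤ q) :
    |∫ u in p..q, (Real.cos u - 1) / u| ≤ (q ^ 2 - p ^ 2) / 4 := by
  have hq : 0 < q := hp.trans_le hpq
  have hae : ∀ᵐ t ∂volume.restrict (Set.uIoc p q), ‖(Real.cos t - 1) / t‖ ≤ t / 2 := by
    rw [Set.uIoc_of_le hpq]
    filter_upwards [ae_restrict_mem measurableSet_Ioc] with t ht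
    have ht0 : 0 < t := hp.trans ht.1
    rw [norm_div, Real.norm_eq_abs, Real.norm_eq_abs, abs_of_pos ht0]
    rw [div_le_div_iff₀ ht0 two_pos]
    have := one_sub_cos t
    nlinarith
  have hii : IntervalIntegrable (fun t : ℝ => t / 2) volume p q :=
    (continuous_id.div_const 2).intervalIntegrable p q
  calc |∫ u in p..q, (Real.cos u - 1) / u| ≤ |∫ u in p..q, u / 2| :=
        intervalIntegral.norm_integral_le_abs_of_norm_le hae hii
    _ = (q ^ 2 - p ^ 2) / 4 := by
        rw [intervalIntegral.integral_div, integral_id, abs_of_nonneg] <;> nlinarith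

lemma integral_inv_eval {p q : ℝ} (hp : 0 < p) (hpq : p ≤ q) :
    ∫ u in p..q, 1 / u = Real.log q - Real.log p := by
  have hq : 0 < q := hp.trans_le hpq
  rw [integral_one_div (not_mem_uIcc hp hpq), Real.log_div hq.ne' hp.ne']

lemma C_split {p q : ℝ} (hp : 0 < p) (hpq : p ≤ q) :
    ∫ u in p..q, Real.cos u / u =
      (Real.log q - Real.log p) + ∫ u in p..q, (Real.cos u - 1) / u := by
  have hq : 0 < q := hp.trans_le hpq
  have hcongr : ∫ u in p..q, Real.cos u / u
      = ∫ u in p..q, (1 / u + (Real.cos u - 1) / u) := by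
    apply intervalIntegral.integral_congr
    intro u hu
    have hu0 : u ≠ 0 := fun h => not_mem_uIcc hp hpq (h ▸ hu)
    field_simp
    ring
  rw [hcongr, intervalIntegral.integral_add (ii_inv hp hq) (ii_cosm1 hp hq),
    integral_inv_eval hp hpq]

lemma integral_inv_sq {p q : ℝ} (hp : 0 < p) (hpq : p ≤ q) :
    ∫ u in p..q, 1 / u ^ 2 = 1 / p - 1 / q := by
  have hq : 0 < q := hp.trans_le hpq
  have key : ∀ u ∈ uIcc p q, HasDerivAt (fun v : ℝ => -(1 / v)) (1 / u ^ 2) u := by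
    intro u hu
    have hu0 : u ≠ 0 := fun h => not_mem_uIcc hp hpq (h ▸ hu)
    simpa [one_div, Pi.neg_def] using (hasDerivAt_inv hu0).neg
  have hii : IntervalIntegrable (fun u : ℝ => 1 / u ^ 2) volume p q :=
    ((continuous_const.continuousOn.div (continuous_pow 2).continuousOn
      fun u h => pow_ne_zero 2 h).mono (uIcc_subset_pos hp hq)).intervalIntegrable
  rw [intervalIntegral.integral_eq_sub_of_hasDerivAt key hii]
  ring

lemma C_ibp {p q : ℝ} (hp : 0 < p) (hpq : p ≤ q) :
    |∫ u in p..q, Real.cos u / u| ≤ 2 / p := by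
  have hq : 0 < q := hp.trans_le hpq
  have key : ∀ u ∈ uIcc p q,
      HasDerivAt (fun v : ℝ => Real.sin v / v) (Real.cos u / u - Real.sin u / u ^ 2) u := by
    intro u hu
    have hu0 : u ≠ 0 := fun h => not_mem_uIcc hp hpq (h ▸ hu)
    have h := (Real.hasDerivAt_sin u).div (hasDerivAt_id u) hu0
    refine h.congr_deriv ?_
    simp only [id]
    field_simp
  have hii : IntervalIntegrable (fun u => Real.cos u / u - Real.sin u / u ^ 2) volume p q :=
    (ii_cosdiv hp hq).sub (ii_sindiv2 hp hq)
  have hftc := intervalIntegral.integral_eq_sub_of_hasDerivAt key hii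
  have hsplit : ∫ u in p..q, (Real.cos u / u - Real.sin u / u ^ 2)
      = (∫ u in p..q, Real.cos u / u) - ∫ u in p..q, Real.sin u / u ^ 2 :=
    intervalIntegral.integral_sub (ii_cosdiv hp hq) (ii_sindiv2 hp hq)
  have hbound : |∫ u in p..q, Real.sin u / u ^ 2| ≤ 1 / p - 1 / q := by
    have hae : ∀ᵐ t ∂volume.restrict (Set.uIoc p q), ‖Real.sin t / t ^ 2‖ ≤ 1 / t ^ 2 := by
      rw [Set.uIoc_of_le hpq]
      filter_upwards [ae_restrict_mem measurableSet_Ioc] with t ht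
      have ht0 : 0 < t := hp.trans ht.1
      rw [norm_div, Real.norm_eq_abs, Real.norm_eq_abs, abs_of_pos (by positivity : (0:ℝ) < t ^ 2)]
      gcongr
      exact Real.abs_sin_le_one t
    have hii2 : IntervalIntegrable (fun u : ℝ => 1 / u ^ 2) volume p q :=
      ((continuous_const.continuousOn.div (continuous_pow 2).continuousOn
        fun u h => pow_ne_zero 2 h).mono (uIcc_subset_pos hp hq)).intervalIntegrable
    calc |∫ u in p..q, Real.sin u / u ^ 2| ≤ |∫ u in p..q, 1 / u ^ 2| :=
          intervalIntegral.norm_integral_le_abs_of_norm_le hae hii2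
      _ = 1 / p - 1 / q := by
          rw [integral_inv_sq hp hpq, abs_of_nonneg]
          rw [sub_nonneg]
          exact one_div_le_one_div_of_le hp hpq
  have heq : ∫ u in p..q, Real.cos u / u
      = (Real.sin q / q - Real.sin p / p) + ∫ u in p..q, Real.sin u / u ^ 2 := by
    rw [hsplit] at hftc; linarith
  have h1 : |Real.sin q / q| ≤ 1 / q := by
    rw [abs_div, abs_of_pos hq]
    gcongr
    exact Real.abs_sin_le_one q
  have h2 : |Real.sin p / p| ≤ 1 / p := by
    rw [abs_div, abs_of_pos hp]
    gcongr
    exact Real.abs_sin_le_one p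
  rw [heq]
  calc |Real.sin q / q - Real.sin p / p + ∫ u in p..q, Real.sin u / u ^ 2|
      ≤ |Real.sin q / q - Real.sin p / p| + |∫ u in p..q, Real.sin u / u ^ 2| := abs_add_le _ _
    _ ≤ (|Real.sin q / q| + |Real.sin p / p|) + (1 / p - 1 / q) := by
        gcongr
        exact abs_sub _ _

    _ ≤ (1 / q + 1 / p) + (1 / p - 1 / q) := by gcongr
    _ = 2 / p := by ring

noncomputable def P (r : ℝ) : ℝ := ∫ u in (1:ℝ)..r, Real.cos u / u

lemma C_eq {p q : ℝ} (hp : 0 < p) (hq : 0 < q) :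
    ∫ u in p..q, Real.cos u / u = P q - P p := by
  have h1 := intervalIntegral.integral_add_adjacent_intervals
    (ii_cosdiv hp one_pos) (ii_cosdiv one_pos hq)
  have h2 : ∫ u in p..(1:ℝ), Real.cos u / u = -P p := intervalIntegral.integral_symm 1 p
  have h3 : ∫ u in (1:ℝ)..q, Real.cos u / u = P q := rfl
  rw [h2, h3] at h1
  linarith

lemma hasDerivP {r : ℝ} (hr : 0 < r) : HasDerivAt P (Real.cos r / r) r := by
  apply intervalIntegral.integral_hasDerivAt_right (ii_cosdiv one_pos hr)
  · exact ((Real.measurable_cos.div measurable_id).stronglyMeasurable).stronglyMeasurableAtFilter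
  · exact (Real.continuous_cos.continuousAt).div continuousAt_id hr.ne'


noncomputable def ell (t : ℝ) : ℝ := -Real.log (1 - t) / t

lemma ell_nonneg {t : ℝ} (ht : t ∈ Ioo (0:ℝ) 1) : 0 ≤ ell t := by
  have h1 : Real.log (1 - t) ≤ 0 :=
    Real.log_nonpos (by linarith [ht.2, ht.1]) (by linarith [ht.1])
  unfold ell
  exact div_nonneg (by linarith) ht.1.le

lemma measurable_ell : Measurable ell :=
  ((Real.measurable_log.comp (measurable_const.sub measurable_id)).neg).div measurable_id

lemma hasSum_ell {t : ℝ} (ht : t ∈ Ioo (0:ℝ) 1) :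
    HasSum (fun k : ℕ => t ^ k / (k + 1)) (ell t) := by
  have h : |t| < 1 := by rw [abs_of_pos ht.1]; exact ht.2
  have h1 := hasSum_pow_div_log_of_abs_lt_one h
  have ht0 : t ≠ 0 := ne_of_gt ht.1
  have h2 := h1.div_const t
  have heq : (fun n : ℕ => t ^ (n + 1) / (n + 1) / t) = fun k : ℕ => t ^ k / (k + 1) := by
    funext k
    rw [pow_succ]
    field_simp
  rw [heq] at h2
  exact h2

noncomputable def S (n : ℕ) (t : ℝ) : ℝ := ∑ k ∈ Finset.range n, t ^ k / (k + 1)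

lemma continuous_S (n : ℕ) : Continuous (S n) := by
  unfold S
  exact continuous_finset_sum _ fun k _ => (continuous_pow k).div_const _

lemma S_int (n : ℕ) : IntegrableOn (S n) (Ioo (0:ℝ) 1) volume :=
  (continuous_S n).integrableOn_Ioc.mono_set Ioo_subset_Ioc_self

lemma S_mono {t : ℝ} (ht : t ∈ Ioo (0:ℝ) 1) : Monotone fun n => S n t := by
  intro m n hmn
  apply Finset.sum_le_sum_of_subset_of_nonneg (Finset.range_subset_range.2 hmn)
  intro k _ _
  have := ht.1
  positivity

lemma S_tendsto {t : ℝ} (ht : t ∈ Ioo (0:ℝ) 1) :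
    Tendsto (fun n => S n t) atTop (𝓝 (ell t)) :=
  (hasSum_ell ht).tendsto_sum_nat

lemma integral_S (n : ℕ) :
    ∫ t in Ioo (0:ℝ) 1, S n t = ∑ k ∈ Finset.range n, 1 / ((k:ℝ) + 1) ^ 2 := by
  unfold S
  rw [MeasureTheory.integral_finset_sum]
  · apply Finset.sum_congr rfl
    intro k _
    have h1 : ∫ t in Ioo (0:ℝ) 1, t ^ k / ((k:ℝ) + 1)
        = (∫ t in Ioo (0:ℝ) 1, t ^ k) / ((k:ℝ) + 1) := integral_div _ _
    rw [h1]
    have h2 : ∫ t in Ioo (0:ℝ) 1, t ^ k = ∫ t in (0:ℝ)..1, t ^ k := by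
      rw [intervalIntegral.integral_of_le zero_le_one, integral_Ioc_eq_integral_Ioo]
    rw [h2, integral_pow]
    have hk : ((k:ℝ) + 1) ≠ 0 := by positivity
    field_simp
    ring
  · intro k _
    exact ((continuous_pow k).div_const _).integrableOn_Ioc.mono_set Ioo_subset_Ioc_self

lemma hasSum_inv_sq : HasSum (fun k : ℕ => 1 / ((k:ℝ) + 1) ^ 2) (π ^ 2 / 6) := by
  have h := hasSum_zeta_two
  have h2 := (hasSum_nat_add_iff' (f := fun n : ℕ => (1:ℝ) / (n:ℝ) ^ 2) 1).2 h
  simp only [Finset.range_one, Finset.sum_singleton, Nat.cast_zero] at h2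
  norm_num at h2
  simpa only [one_div] using h2

lemma tendsto_integral_S :
    Tendsto (fun n => ∫ t in Ioo (0:ℝ) 1, S n t) atTop (𝓝 (π ^ 2 / 6)) := by
  simp_rw [integral_S]
  exact hasSum_inv_sq.tendsto_sum_nat

lemma ell_integrableOn : IntegrableOn ell (Ioo (0:ℝ) 1) volume := by
  constructor
  · exact measurable_ell.aestronglyMeasurable
  · rw [hasFiniteIntegral_iff_norm]
    have hae : ∀ᵐ t ∂volume.restrict (Ioo (0:ℝ) 1),
        ENNReal.ofReal ‖ell t‖ = ENNReal.ofReal (ell t) := by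
      filter_upwards [ae_restrict_mem measurableSet_Ioo] with t ht
      rw [Real.norm_eq_abs, abs_of_nonneg (ell_nonneg ht)]
    rw [lintegral_congr_ae hae]
    have hmc := lintegral_tendsto_of_tendsto_of_monotone
      (f := fun n t => ENNReal.ofReal (S n t)) (F := fun t => ENNReal.ofReal (ell t))
      (μ := volume.restrict (Ioo (0:ℝ) 1))
      (fun n => ((continuous_S n).measurable.ennreal_ofReal).aemeasurable)
      ?_ ?_
    · have hle : ∀ n, ∫⁻ t, ENNReal.ofReal (S n t) ∂(volume.restrict (Ioo (0:ℝ) 1))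
          ≤ ENNReal.ofReal (π ^ 2 / 6) := by
        intro n
        have hS_nonneg : 0 ≤ᵐ[volume.restrict (Ioo (0:ℝ) 1)] S n := by
          filter_upwards [ae_restrict_mem measurableSet_Ioo] with t ht
          unfold S
          apply Finset.sum_nonneg
          intro k _
          have := ht.1
          positivity
        rw [← ofReal_integral_eq_lintegral_ofReal (S_int n) hS_nonneg]
        apply ENNReal.ofReal_le_ofReal
        rw [integral_S]
        exact sum_le_hasSum _ (fun k _ => by positivity) hasSum_inv_sq
      have := le_of_tendsto' hmc hle
      exact lt_of_le_of_lt this ENNReal.ofReal_lt_top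
    · filter_upwards [ae_restrict_mem measurableSet_Ioo] with t ht
      intro m n hmn
      exact ENNReal.ofReal_le_ofReal (S_mono ht hmn)
    · filter_upwards [ae_restrict_mem measurableSet_Ioo] with t ht
      exact (ENNReal.continuous_ofReal.tendsto _).comp (S_tendsto ht)

lemma integral_ell : ∫ t in Ioo (0:ℝ) 1, ell t = π ^ 2 / 6 := by
  have h := integral_tendsto_of_tendsto_of_monotone
    (μ := volume.restrict (Ioo (0:ℝ) 1)) (f := S) (F := ell)
    (fun n => S_int n) ell_integrableOn
    (by filter_upwards [ae_restrict_mem measurableSet_Ioo] with t ht using S_mono ht)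
    (by filter_upwards [ae_restrict_mem measurableSet_Ioo] with t ht using S_tendsto ht)
  exact tendsto_nhds_unique h tendsto_integral_S


lemma contP : ContinuousOn P (Ioi (0:ℝ)) :=
  fun _ hr => ((hasDerivP hr).continuousAt).continuousWithinAt

noncomputable def Phi (s : ℝ) : ℝ :=
  ∫ t in Ioo (0:ℝ) 1, (1 / t) * (P s - P ((1 - t) * s))

lemma sub_pos_mul {s t : ℝ} (hs : 0 < s) (ht : t ∈ Ioo (0:ℝ) 1) : 0 < (1 - t) * s :=
  mul_pos (by linarith [ht.2]) hs

lemma C_eq' {s t : ℝ} (hs : 0 < s) (ht : t ∈ Ioo (0:ℝ) 1) :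
    P s - P ((1 - t) * s) = ∫ u in ((1 - t) * s)..s, Real.cos u / u :=
  (C_eq (sub_pos_mul hs ht) hs).symm

lemma mul_le_self' {s t : ℝ} (hs : 0 < s) (ht : t ∈ Ioo (0:ℝ) 1) : (1 - t) * s ≤ s := by
  nlinarith [ht.1, ht.2]

lemma log_diff {s t : ℝ} (hs : 0 < s) (ht : t ∈ Ioo (0:ℝ) 1) :
    Real.log s - Real.log ((1 - t) * s) = -Real.log (1 - t) := by
  rw [Real.log_mul (by linarith [ht.2] : (1:ℝ) - t ≠ 0) hs.ne']
  ring

lemma Phi_bound {s t : ℝ} (hs : 0 < s) (ht : t ∈ Ioo (0:ℝ) 1) :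
    |(1 / t) * (P s - P ((1 - t) * s))| ≤ ell t := by
  have ht0 : (0:ℝ) < t := ht.1
  have h := C_le_log (sub_pos_mul hs ht) (mul_le_self' hs ht)
  rw [log_diff hs ht] at h
  rw [C_eq' hs ht]
  calc |1 / t * ∫ u in ((1-t)*s)..s, Real.cos u / u|
      = 1 / t * |∫ u in ((1-t)*s)..s, Real.cos u / u| := by
        rw [abs_mul, abs_of_pos (show (0:ℝ) < 1 / t by positivity)]
    _ ≤ 1 / t * -Real.log (1 - t) := mul_le_mul_of_nonneg_left h (by positivity)
    _ = ell t := by unfold ell; ring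

lemma Phi_meas {s : ℝ} (hs : 0 < s) :
    AEStronglyMeasurable (fun t : ℝ => (1 / t) * (P s - P ((1 - t) * s)))
      (volume.restrict (Ioo (0:ℝ) 1)) := by
  apply ContinuousOn.aestronglyMeasurable _ measurableSet_Ioo
  apply ContinuousOn.mul
  · exact continuous_const.continuousOn.div continuous_id.continuousOn
      (fun t ht => ne_of_gt ht.1)
  · apply ContinuousOn.sub
    · exact continuousOn_const
    · exact contP.comp (Continuous.continuousOn (by continuity))
        (fun t ht => sub_pos_mul hs ht)

lemma Phi_integrableOn {s : ℝ} (hs : 0 < s) :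
    IntegrableOn (fun t : ℝ => (1 / t) * (P s - P ((1 - t) * s))) (Ioo (0:ℝ) 1) volume := by
  apply Integrable.mono' ell_integrableOn (Phi_meas hs)
  filter_upwards [ae_restrict_mem measurableSet_Ioo] with t ht
  rw [Real.norm_eq_abs]
  exact Phi_bound hs ht

lemma Phi_near : ∀ s : ℝ, 0 < s → |Phi s - π ^ 2 / 6| ≤ s ^ 2 / 2 := by
  intro s hs
  have hsub : Phi s - π ^ 2 / 6
      = ∫ t in Ioo (0:ℝ) 1, ((1 / t) * (P s - P ((1 - t) * s)) - ell t) := by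
    rw [integral_sub (Phi_integrableOn hs) ell_integrableOn, integral_ell]
    rfl
  rw [hsub]
  have hbound : ∀ᵐ t ∂volume.restrict (Ioo (0:ℝ) 1),
      ‖(1 / t) * (P s - P ((1 - t) * s)) - ell t‖ ≤ s ^ 2 / 2 := by
    filter_upwards [ae_restrict_mem measurableSet_Ioo] with t ht
    have hC := C_split (sub_pos_mul hs ht) (mul_le_self' hs ht)
    rw [log_diff hs ht] at hC
    have hE := Cm1_le (sub_pos_mul hs ht) (mul_le_self' hs ht)
    have ht0 : (0:ℝ) < t := ht.1
    have key : (1 / t) * (P s - P ((1 - t) * s)) - ell t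
        = (1 / t) * ∫ u in ((1 - t) * s)..s, (Real.cos u - 1) / u := by
      rw [C_eq' hs ht, hC]
      unfold ell
      field_simp
      ring
    rw [key, Real.norm_eq_abs, abs_mul, abs_of_pos (by positivity : (0:ℝ) < 1 / t)]
    have h2 : (s ^ 2 - ((1 - t) * s) ^ 2) / 4 ≤ t * s ^ 2 / 2 := by nlinarith [sq_nonneg (t * s)]
    calc 1 / t * |∫ u in ((1-t)*s)..s, (Real.cos u - 1) / u|
        ≤ 1 / t * (t * s ^ 2 / 2) := by
          apply mul_le_mul_of_nonneg_left (le_trans hE h2) (by positivity)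
      _ = s ^ 2 / 2 := by field_simp
  calc ‖∫ t in Ioo (0:ℝ) 1, ((1 / t) * (P s - P ((1 - t) * s)) - ell t)‖
      ≤ ∫ t in Ioo (0:ℝ) 1, (s ^ 2 / 2 : ℝ) :=
        norm_integral_le_of_norm_le (integrable_const _) hbound
    _ = s ^ 2 / 2 := by
        rw [setIntegral_const, Real.volume_real_Ioo]
        norm_num

lemma tendsto_Phi_zero : Tendsto Phi (𝓝[>] (0:ℝ)) (𝓝 (π ^ 2 / 6)) := by
  have h1 : Tendsto (fun s : ℝ => s ^ 2 / 2) (𝓝[>] (0:ℝ)) (𝓝 0) := by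
    have : Tendsto (fun s : ℝ => s ^ 2 / 2) (𝓝 (0:ℝ)) (𝓝 ((0:ℝ) ^ 2 / 2)) :=
      ((continuous_pow 2).div_const 2).tendsto 0
    simpa using this.mono_left nhdsWithin_le_nhds
  have h2 : Tendsto (fun s => Phi s - π ^ 2 / 6) (𝓝[>] (0:ℝ)) (𝓝 0) := by
    apply squeeze_zero_norm' _ h1
    filter_upwards [self_mem_nhdsWithin] with s hs
    exact Phi_near s hs
  have := h2.add_const (π ^ 2 / 6)
  simpa using this

lemma tendsto_Phi_atTop : Tendsto Phi atTop (𝓝 0) := by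
  have h0 : (0:ℝ) = ∫ t in Ioo (0:ℝ) 1, (0:ℝ) := by simp
  rw [h0]
  apply MeasureTheory.tendsto_integral_filter_of_dominated_convergence ell
  · filter_upwards [eventually_gt_atTop 0] with s hs
    exact Phi_meas hs
  · filter_upwards [eventually_gt_atTop 0] with s hs
    filter_upwards [ae_restrict_mem measurableSet_Ioo] with t ht
    rw [Real.norm_eq_abs]
    exact Phi_bound hs ht
  · exact ell_integrableOn
  · filter_upwards [ae_restrict_mem measurableSet_Ioo] with t ht
    apply squeeze_zero_norm' _
      (Tendsto.div_atTop (tendsto_const_nhds (x := 2 / (t * (1 - t)))) tendsto_id)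
    filter_upwards [eventually_gt_atTop 0] with s hs
    rw [Real.norm_eq_abs, abs_mul, abs_of_pos (by have := ht.1; positivity : (0:ℝ) < 1 / t)]
    have hibp := C_ibp (sub_pos_mul hs ht) (mul_le_self' hs ht)
    rw [C_eq' hs ht]
    have ht0 : (0:ℝ) < t := ht.1
    have ht1 : (0:ℝ) < 1 - t := by linarith [ht.2]
    calc 1 / t * |∫ u in ((1-t)*s)..s, Real.cos u / u|
        ≤ 1 / t * (2 / ((1 - t) * s)) := by
          apply mul_le_mul_of_nonneg_left hibp (by positivity)
      _ = 2 / (t * (1 - t)) / s := by field_simp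


lemma inner_subst {x : ℝ} (hx : 0 < x) :
    (1 / x) * ∫ y in (0:ℝ)..x, (Real.cos (x - y) - Real.cos x) / y
      = ∫ t in (0:ℝ)..1, (Real.cos (x - x * t) - Real.cos x) / (x * t) := by
  have h := intervalIntegral.integral_comp_mul_left
    (f := fun y => (Real.cos (x - y) - Real.cos x) / y) (a := (0:ℝ)) (b := 1) hx.ne'
  rw [mul_zero, mul_one] at h
  rw [h, smul_eq_mul, one_div]

lemma x_integral_eval {e T t : ℝ} (he : 0 < e) (heT : e ≤ T) (ht : t ∈ Ioo (0:ℝ) 1) :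
    ∫ x in e..T, (Real.cos (x - x * t) - Real.cos x) / (x * t)
      = (1 / t) * (P e - P ((1 - t) * e)) - (1 / t) * (P T - P ((1 - t) * T)) := by
  have hT0 : 0 < T := he.trans_le heT
  have ht0 : 0 < t := ht.1
  have ht1 : 0 < 1 - t := by linarith [ht.2]
  have hcongr : ∫ x in e..T, (Real.cos (x - x * t) - Real.cos x) / (x * t)
      = ∫ x in e..T, ((1 / t) * (Real.cos ((1 - t) * x) / x)
          - (1 / t) * (Real.cos x / x)) := by
    apply intervalIntegral.integral_congr
    intro x hx
    have hx0 : x ≠ 0 := fun h => not_mem_uIcc he heT (h ▸ hx)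
    have harg : x - x * t = (1 - t) * x := by ring
    dsimp only
    rw [harg, one_div, inv_mul_eq_div, inv_mul_eq_div, div_div, div_div,
      div_sub_div_same]
  have ii1 : IntervalIntegrable (fun x => Real.cos ((1 - t) * x) / x) volume e T := by
    apply ContinuousOn.intervalIntegrable
    apply ContinuousOn.mono _ (uIcc_subset_pos he hT0)
    exact (Real.continuous_cos.comp (continuous_const.mul continuous_id)).continuousOn.div
      continuous_id.continuousOn (fun u hu => hu)
  have ii2 : IntervalIntegrable (fun x => Real.cos x / x) volume e T := ii_cosdiv he hT0
  have hsub : ∫ x in e..T, ((1 / t) * (Real.cos ((1 - t) * x) / x)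
        - (1 / t) * (Real.cos x / x))
      = (1 / t) * (∫ x in e..T, Real.cos ((1 - t) * x) / x)
        - (1 / t) * (∫ x in e..T, Real.cos x / x) := by
    rw [intervalIntegral.integral_sub (ii1.const_mul _) (ii2.const_mul _),
      intervalIntegral.integral_const_mul, intervalIntegral.integral_const_mul]
  have hscale : ∫ x in e..T, Real.cos ((1 - t) * x) / x
      = P ((1 - t) * T) - P ((1 - t) * e) := by
    have h := intervalIntegral.integral_comp_mul_left
      (f := fun u => Real.cos u / u) (a := e) (b := T) ht1.ne'
    have hpt : ∀ x : ℝ, x ≠ 0 → Real.cos ((1 - t) * x) / x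
        = (1 - t) * (Real.cos ((1 - t) * x) / ((1 - t) * x)) := by
      intro x hx0
      field_simp
    have hcongr2 : ∫ x in e..T, Real.cos ((1 - t) * x) / x
        = ∫ x in e..T, (1 - t) * (Real.cos ((1 - t) * x) / ((1 - t) * x)) := by
      apply intervalIntegral.integral_congr
      intro x hx
      exact hpt x (fun h => not_mem_uIcc he heT (h ▸ hx))
    rw [hcongr2, intervalIntegral.integral_const_mul, h, smul_eq_mul,
      ← mul_assoc, mul_inv_cancel₀ ht1.ne', one_mul]
    exact C_eq (mul_pos ht1 he) (mul_pos ht1 hT0)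
  have hplain : ∫ x in e..T, Real.cos x / x = P T - P e := C_eq he hT0
  rw [hcongr, hsub, hscale, hplain]
  ring

lemma main_eq {e T : ℝ} (he : e ∈ Ioo (0:ℝ) 1) (hT : 1 ≤ T) :
    (∫ x in e..T, (1 / x) * ∫ y in (0:ℝ)..x, (Real.cos (x - y) - Real.cos x) / y)
      = Phi e - Phi T := by
  have he0 : 0 < e := he.1
  have heT : e ≤ T := le_trans he.2.le hT
  have hT0 : 0 < T := he0.trans_le heT
  -- Step (a): rewrite as iterated set integral
  have step_a : (∫ x in e..T, (1 / x) * ∫ y in (0:ℝ)..x, (Real.cos (x - y) - Real.cos x) / y)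
      = ∫ x in Ioc e T, (∫ t in Ioc (0:ℝ) 1,
          (Real.cos (x - x * t) - Real.cos x) / (x * t)) := by
    rw [intervalIntegral.integral_of_le heT]
    apply setIntegral_congr_fun measurableSet_Ioc
    intro x hx
    have hx0 : 0 < x := he0.trans hx.1
    dsimp only
    rw [inner_subst hx0, intervalIntegral.integral_of_le zero_le_one]
  -- Step (b): integrability on the product
  haveI hfin1 : IsFiniteMeasure (volume.restrict (Ioc e T)) :=
    ⟨by rw [Measure.restrict_apply_univ]; exact measure_Ioc_lt_top⟩
  haveI hfin2 : IsFiniteMeasure (volume.restrict (Ioc (0:ℝ) 1)) :=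
    ⟨by rw [Measure.restrict_apply_univ]; exact measure_Ioc_lt_top⟩
  have hint : Integrable
      (Function.uncurry fun x t => (Real.cos (x - x * t) - Real.cos x) / (x * t))
      ((volume.restrict (Ioc e T)).prod (volume.restrict (Ioc (0:ℝ) 1))) := by
    have hmeas : Measurable
        (Function.uncurry fun x t => (Real.cos (x - x * t) - Real.cos x) / (x * t)) := by
      apply Measurable.div
      · exact (Real.measurable_cos.comp
          (measurable_fst.sub (measurable_fst.mul measurable_snd))).sub
          (Real.measurable_cos.comp measurable_fst)
      · exact measurable_fst.mul measurable_snd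
    apply Integrable.mono' (integrable_const (1:ℝ)) hmeas.aestronglyMeasurable
    rw [Measure.prod_restrict]
    filter_upwards [ae_restrict_mem (measurableSet_Ioc.prod measurableSet_Ioc)] with p hp
    obtain ⟨hp1, hp2⟩ := hp
    have hx0 : 0 < p.1 := he0.trans hp1.1
    have ht0 : 0 < p.2 := hp2.1
    rw [Function.uncurry, Real.norm_eq_abs, abs_div]
    rw [div_le_one (by positivity)]
    calc |Real.cos (p.1 - p.1 * p.2) - Real.cos p.1| ≤ |p.1 - p.1 * p.2 - p.1| :=
          cos_lip _ _
      _ = |p.1 * p.2| := by rw [show p.1 - p.1 * p.2 - p.1 = -(p.1 * p.2) by ring, abs_neg]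
  -- Step (c): Fubini
  have step_c : ∫ x in Ioc e T, (∫ t in Ioc (0:ℝ) 1,
        (Real.cos (x - x * t) - Real.cos x) / (x * t))
      = ∫ t in Ioc (0:ℝ) 1, (∫ x in Ioc e T,
          (Real.cos (x - x * t) - Real.cos x) / (x * t)) :=
    integral_integral_swap hint
  -- Step (d): evaluate the inner x-integral for t ∈ Ioo 0 1
  have step_d : ∫ t in Ioc (0:ℝ) 1, (∫ x in Ioc e T,
        (Real.cos (x - x * t) - Real.cos x) / (x * t))
      = ∫ t in Ioo (0:ℝ) 1, ((1 / t) * (P e - P ((1 - t) * e))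
          - (1 / t) * (P T - P ((1 - t) * T))) := by
    rw [integral_Ioc_eq_integral_Ioo]
    apply setIntegral_congr_fun measurableSet_Ioo
    intro t ht
    dsimp only
    rw [← intervalIntegral.integral_of_le heT]
    exact x_integral_eval he0 heT ht
  -- Step (e): split
  have step_e : ∫ t in Ioo (0:ℝ) 1, ((1 / t) * (P e - P ((1 - t) * e))
        - (1 / t) * (P T - P ((1 - t) * T))) = Phi e - Phi T := by
    rw [integral_sub (Phi_integrableOn he0) (Phi_integrableOn hT0)]
    rfl
  rw [step_a, step_c, step_d, step_e]

end ZT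

/-- The iterated improper integral
`∫₀^{∞} (dx/x) ∫₀^{x} (dy/y) [cos(x − y) − cos x]`,
understood as the limit `ε → 0⁺`, `T → ∞` of
`∫_{ε}^{T} (1/x)·(∫₀^{x} (cos(x − y) − cos x)/y dy) dx`,
converges and equals `ζ(2) = π²/6`. -/
theorem zeta_two_integral_repr :
    Tendsto (fun p : ℝ × ℝ =>
        ∫ x in p.1..p.2, (1 / x) *
          ∫ y in (0 : ℝ)..x, (Real.cos (x - y) - Real.cos x) / y)
      ((𝓝[>] (0 : ℝ)) ×ˢ atTop) (𝓝 (π ^ 2 / 6)) := by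
  have hU : Ioo (0:ℝ) 1 ∈ 𝓝[>] (0:ℝ) :=
    Ioo_mem_nhdsGT_of_mem (by constructor <;> norm_num)
  have hV : Ici (1:ℝ) ∈ (atTop : Filter ℝ) := mem_atTop 1
  have hev : ∀ᶠ p : ℝ × ℝ in (𝓝[>] (0:ℝ)) ×ˢ atTop,
      ZT.Phi p.1 - ZT.Phi p.2
        = ∫ x in p.1..p.2, (1 / x) *
            ∫ y in (0 : ℝ)..x, (Real.cos (x - y) - Real.cos x) / y := by
    filter_upwards [Filter.prod_mem_prod hU hV] with p hp
    exact (ZT.main_eq hp.1 hp.2).symm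
  have hlim : Tendsto (fun p : ℝ × ℝ => ZT.Phi p.1 - ZT.Phi p.2)
      ((𝓝[>] (0:ℝ)) ×ˢ atTop) (𝓝 (π ^ 2 / 6 - 0)) :=
    (ZT.tendsto_Phi_zero.comp tendsto_fst).sub (ZT.tendsto_Phi_atTop.comp tendsto_snd)
  rw [sub_zero] at hlim
  exact hlim.congr' hev
end

section
/- For every α with 0 ≤ α ≤ 1, the iterated improper integral ∫₀^{∞} (dx/x) ∫₀^{x} (dy/y) [cos(x − αy) − cos x] converges and equals the dilogarithm Li₂(α) = ∑_{k=1}^{∞} αᵏ/k². -/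
open Real MeasureTheory Filter Topology intervalIntegral Set

private lemma cos_lip (a b : ℝ) : |Real.cos a - Real.cos b| ≤ |a - b| := by
  rw [Real.cos_sub_cos]
  have h1 : |Real.sin ((a + b) / 2)| ≤ 1 := Real.abs_sin_le_one _
  have h2 : |Real.sin ((a - b) / 2)| ≤ |(a - b) / 2| := Real.abs_sin_le_abs
  calc |(-2) * Real.sin ((a + b) / 2) * Real.sin ((a - b) / 2)|
      = 2 * |Real.sin ((a + b) / 2)| * |Real.sin ((a - b) / 2)| := by
        rw [abs_mul, abs_mul]; norm_num
    _ ≤ 2 * 1 * |(a - b) / 2| := by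
        gcongr
    _ = |a - b| := by rw [abs_div, abs_two]; ring

private lemma cosdiv_intble {c d : ℝ} (hc : 0 < c) (hd : 0 < d) :
    IntervalIntegrable (fun u => Real.cos u / u) volume c d := by
  apply ContinuousOn.intervalIntegrable
  intro u hu
  have hu0 : u ≠ 0 := by
    have := hu.1
    have : 0 < u := lt_of_lt_of_le (lt_min hc hd) this
    linarith
  exact ((Real.continuous_cos.continuousAt.div continuousAt_id hu0)).continuousWithinAt

private lemma inv_intble {c d : ℝ} (hc : 0 < c) (hd : 0 < d) :
    IntervalIntegrable (fun u : ℝ => 1 / u) volume c d := by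
  apply ContinuousOn.intervalIntegrable
  intro u hu
  have hu0 : u ≠ 0 := by
    have := hu.1
    have : 0 < u := lt_of_lt_of_le (lt_min hc hd) this
    linarith
  exact ((continuous_const.continuousAt.div continuousAt_id hu0)).continuousWithinAt

private lemma seg_bound {a c : ℝ} (ha : 0 < a) (ha1 : a ≤ 1) (hc : 0 < c) :
    |∫ u in a*c..c, Real.cos u / u| ≤ -Real.log a := by
  have hac : a * c ≤ c := by nlinarith
  have hacpos : 0 < a * c := mul_pos ha hc
  have h1 : |∫ u in a*c..c, Real.cos u / u| ≤ ∫ u in a*c..c, |Real.cos u / u| :=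
    intervalIntegral.abs_integral_le_integral_abs hac
  have h2 : ∫ u in a*c..c, |Real.cos u / u| ≤ ∫ u in a*c..c, 1 / u := by
    apply intervalIntegral.integral_mono_on hac ((cosdiv_intble hacpos hc).abs)
      (inv_intble hacpos hc)
    intro x hx
    have hx0 : 0 < x := lt_of_lt_of_le hacpos hx.1
    rw [abs_div, abs_of_pos hx0]
    gcongr
    exact Real.abs_cos_le_one x
  have h3 : ∫ u in a*c..c, 1 / u = Real.log (c / (a * c)) := by
    apply integral_one_div
    intro h
    have := h.1
    have h4 : 0 < min (a*c) c := lt_min hacpos hc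
    linarith [h4.trans_le h.1]
  have h5 : Real.log (c / (a * c)) = -Real.log a := by
    rw [show c / (a * c) = a⁻¹ by field_simp, Real.log_inv]
  calc |∫ u in a*c..c, Real.cos u / u| ≤ ∫ u in a*c..c, 1 / u := h1.trans h2
    _ = -Real.log a := h3.trans h5

private lemma cm1_intble {c d : ℝ} (hc : 0 < c) (hd : 0 < d) :
    IntervalIntegrable (fun u : ℝ => (Real.cos u - 1) / u) volume c d := by
  apply ContinuousOn.intervalIntegrable
  intro u hu
  have hu0 : u ≠ 0 := by
    have h := hu.1
    have : 0 < u := lt_of_lt_of_le (lt_min hc hd) h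
    linarith
  exact (((Real.continuous_cos.sub continuous_const).continuousAt.div
    continuousAt_id hu0)).continuousWithinAt

private lemma seg_eps {a : ℝ} (ha : 0 < a) (ha1 : a ≤ 1) :
    Tendsto (fun ε => ∫ u in a*ε..ε, Real.cos u / u) (𝓝[>] (0:ℝ))
      (𝓝 (-Real.log a)) := by
  have key : ∀ ε : ℝ, 0 < ε →
      ∫ u in a*ε..ε, Real.cos u / u
        = -Real.log a + ∫ u in a*ε..ε, (Real.cos u - 1) / u := by
    intro ε hε
    have hpos : 0 < a * ε := mul_pos ha hε
    have h1 : (fun u : ℝ => Real.cos u / u)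
        = fun u => 1 / u + (Real.cos u - 1) / u := by
      funext u
      by_cases hu : u = 0
      · simp [hu]
      · field_simp; ring
    rw [h1, intervalIntegral.integral_add (inv_intble hpos hε) (cm1_intble hpos hε)]
    congr 1
    rw [integral_one_div]
    · rw [show ε / (a * ε) = a⁻¹ by field_simp, Real.log_inv]
    · intro h
      have h4 : 0 < min (a*ε) ε := lt_min hpos hε
      exact absurd (h4.trans_le h.1) (lt_irrefl 0)
  have hrem : Tendsto (fun ε => ∫ u in a*ε..ε, (Real.cos u - 1) / u) (𝓝[>] (0:ℝ)) (𝓝 0) := by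
    apply squeeze_zero_norm' (a := fun ε : ℝ => ε ^ 2 / 2)
    · filter_upwards [self_mem_nhdsWithin] with ε (hε : 0 < ε)
      have hpos : 0 < a * ε := mul_pos ha hε
      have hb : ∀ u ∈ Set.uIoc (a*ε) ε, ‖(Real.cos u - 1) / u‖ ≤ ε / 2 := by
        intro u hu
        have h1 : 0 < u := by
          rcases hu.1 with h
          have : min (a*ε) ε ≤ u := le_of_lt h
          calc (0:ℝ) < min (a*ε) ε := lt_min hpos hε
            _ ≤ u := this
        have h2 : u ≤ ε := by
          have := hu.2
          calc u ≤ max (a*ε) ε := this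
            _ = ε := max_eq_right (by nlinarith)
        rw [norm_div, Real.norm_eq_abs, Real.norm_eq_abs, abs_of_pos h1, abs_of_nonpos
          (by linarith [Real.cos_le_one u])]
        have h3 : 1 - Real.cos u ≤ u ^ 2 / 2 := by
          nlinarith [Real.one_sub_sq_div_two_le_cos (x := u)]
        rw [div_le_iff₀ h1]
        nlinarith
      calc ‖∫ u in a*ε..ε, (Real.cos u - 1) / u‖ ≤ ε / 2 * |ε - a*ε| :=
            intervalIntegral.norm_integral_le_of_norm_le_const hb
        _ ≤ ε ^ 2 / 2 := by
            rw [abs_of_nonneg (by nlinarith)]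
            nlinarith
    · have : Tendsto (fun ε : ℝ => ε ^ 2 / 2) (𝓝 0) (𝓝 0) := by
        have := ((continuous_pow 2).div_const (2:ℝ)).tendsto (0:ℝ)
        simpa using this
      exact this.mono_left nhdsWithin_le_nhds
  have := hrem.const_add (-Real.log a)
  simp only [add_zero] at this
  apply this.congr'
  filter_upwards [self_mem_nhdsWithin] with ε (hε : 0 < ε)
  exact (key ε hε).symm

private lemma seg_T {a : ℝ} (ha : 0 < a) (ha1 : a ≤ 1) :
    Tendsto (fun T => ∫ u in a*T..T, Real.cos u / u) atTop (𝓝 0) := by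
  apply squeeze_zero_norm' (a := fun T : ℝ => 3 / (a ^ 2 * T))
  · filter_upwards [eventually_gt_atTop 0] with T hT
    have hpos : 0 < a * T := mul_pos ha hT
    have haT : a * T ≤ T := by nlinarith
    have hsub : ∀ x ∈ Set.uIcc (a*T) T, 0 < x := by
      intro x hx
      exact lt_of_lt_of_le (lt_min hpos hT) hx.1
    -- integration by parts:  ∫ u⁻¹ * cos = [u⁻¹ sin] + ∫ u⁻² sin
    have hu : ∀ x ∈ Set.uIcc (a*T) T, HasDerivAt (fun u : ℝ => u⁻¹) (-(x ^ 2)⁻¹) x := by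
      intro x hx
      simpa using hasDerivAt_inv (ne_of_gt (hsub x hx))
    have hv : ∀ x ∈ Set.uIcc (a*T) T, HasDerivAt Real.sin (Real.cos x) x :=
      fun x _ => Real.hasDerivAt_sin x
    have hu' : IntervalIntegrable (fun x : ℝ => -(x ^ 2)⁻¹) volume (a*T) T := by
      apply ContinuousOn.intervalIntegrable
      intro x hx
      have := hsub x hx
      exact (((continuous_pow 2).continuousAt.inv₀ (by positivity)).neg).continuousWithinAt
    have hv' : IntervalIntegrable Real.cos volume (a*T) T :=
      Real.continuous_cos.intervalIntegrable _ _
    have ibp := intervalIntegral.integral_mul_deriv_eq_deriv_mul hu hv hu' hv'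
    have heq : ∀ x : ℝ, Real.cos x / x = x⁻¹ * Real.cos x := by
      intro x; rw [div_eq_inv_mul]
    simp only [heq]
    rw [ibp]
    have hb1 : |T⁻¹ * Real.sin T| ≤ 1 / (a*T) := by
      rw [abs_mul, abs_of_pos (inv_pos.mpr hT)]
      calc T⁻¹ * |Real.sin T| ≤ T⁻¹ * 1 := by
            gcongr; exact Real.abs_sin_le_one T
        _ ≤ 1 / (a*T) := by
            rw [mul_one, inv_eq_one_div]
            exact one_div_le_one_div_of_le hpos haT
    have hb2 : |(a*T)⁻¹ * Real.sin (a*T)| ≤ 1 / (a*T) := by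
      rw [abs_mul, abs_of_pos (inv_pos.mpr hpos)]
      calc (a*T)⁻¹ * |Real.sin (a*T)| ≤ (a*T)⁻¹ * 1 := by
            gcongr; exact Real.abs_sin_le_one _
        _ = 1 / (a*T) := by rw [mul_one, inv_eq_one_div]
    have hb3 : ‖∫ x in a*T..T, -(x ^ 2)⁻¹ * Real.sin x‖ ≤ ((a*T)⁻¹ * (a*T)⁻¹) * |T - (a*T)| := by
      apply intervalIntegral.norm_integral_le_of_norm_le_const
      intro x hx
      have hx1 : a * T < x := by
        have := hx.1
        rwa [min_eq_left haT] at this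
      have hx0 : 0 < x := hpos.trans hx1
      rw [norm_mul, norm_neg, norm_inv, Real.norm_eq_abs, Real.norm_eq_abs,
        abs_of_pos (by positivity : (0:ℝ) < x ^ 2)]
      calc (x ^ 2)⁻¹ * |Real.sin x| ≤ (x ^ 2)⁻¹ * 1 := by
            gcongr; exact Real.abs_sin_le_one _
        _ ≤ (a*T)⁻¹ * (a*T)⁻¹ := by
            rw [mul_one, ← mul_inv]
            apply inv_anti₀ (by positivity)
            nlinarith
    have habs : |T - a*T| ≤ T := by
      rw [abs_of_nonneg (by nlinarith)]; nlinarith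
    have hfin : ((a*T)⁻¹ * (a*T)⁻¹) * |T - (a*T)| ≤ 1 / (a^2*T) := by
      calc ((a*T)⁻¹ * (a*T)⁻¹) * |T - (a*T)| ≤ ((a*T)⁻¹ * (a*T)⁻¹) * T :=
            mul_le_mul_of_nonneg_left habs (by positivity)
        _ = 1 / (a^2*T) := by field_simp
    have h1aT : 1 / (a*T) ≤ 1 / (a^2*T) :=
      one_div_le_one_div_of_le (by positivity) (by nlinarith)
    calc ‖T⁻¹ * Real.sin T - (a*T)⁻¹ * Real.sin (a*T) - ∫ x in a*T..T, -(x ^ 2)⁻¹ * Real.sin x‖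
        ≤ |T⁻¹ * Real.sin T| + |(a*T)⁻¹ * Real.sin (a*T)| + ‖∫ x in a*T..T, -(x ^ 2)⁻¹ * Real.sin x‖ := by
          rw [Real.norm_eq_abs]
          calc |T⁻¹ * Real.sin T - (a*T)⁻¹ * Real.sin (a*T) - ∫ x in a*T..T, -(x ^ 2)⁻¹ * Real.sin x|
              ≤ |T⁻¹ * Real.sin T - (a*T)⁻¹ * Real.sin (a*T)| + |∫ x in a*T..T, -(x ^ 2)⁻¹ * Real.sin x| :=
                abs_sub _ _
            _ ≤ |T⁻¹ * Real.sin T| + |(a*T)⁻¹ * Real.sin (a*T)| + |∫ x in a*T..T, -(x ^ 2)⁻¹ * Real.sin x| := by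
                have := abs_sub (T⁻¹ * Real.sin T) ((a*T)⁻¹ * Real.sin (a*T))
                linarith
      _ ≤ 1 / (a^2*T) + 1 / (a^2*T) + 1 / (a^2*T) := by
          have := hb3.trans hfin
          have h1 := hb1.trans h1aT
          have h2 := hb2.trans h1aT
          rw [Real.norm_eq_abs] at this ⊢
          linarith
      _ = 3 / (a^2*T) := by ring
  · have h1 : Tendsto (fun T : ℝ => a ^ 2 * T) atTop atTop :=
      (tendsto_id.const_mul_atTop (by positivity))
    exact tendsto_const_nhds.div_atTop h1

private lemma frullani_decomp {a ε T : ℝ} (ha : 0 < a) (hε : 0 < ε) (hT : 0 < T) :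
    ∫ x in ε..T, (Real.cos (a*x) - Real.cos x) / x
      = (∫ u in a*ε..ε, Real.cos u / u) - (∫ u in a*T..T, Real.cos u / u) := by
  have key1 : ∀ (c d : ℝ), 0 < c → 0 < d →
      IntervalIntegrable (fun x : ℝ => Real.cos (a*x) / x) volume c d := by
    intro c d hc hd
    apply ContinuousOn.intervalIntegrable
    intro u hu
    have hu0 : u ≠ 0 := by
      have h := hu.1
      have : 0 < u := lt_of_lt_of_le (lt_min hc hd) h
      linarith
    exact ((Real.continuous_cos.comp (continuous_const.mul continuous_id)).continuousAt.div
      continuousAt_id hu0).continuousWithinAt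
  have step0 : ∫ x in ε..T, (Real.cos (a*x) - Real.cos x) / x
      = (∫ x in ε..T, Real.cos (a*x) / x) - ∫ x in ε..T, Real.cos x / x := by
    rw [← intervalIntegral.integral_sub (key1 ε T hε hT) (cosdiv_intble hε hT)]
    congr 1
    funext x
    rw [sub_div]
  have step1 : ∫ x in ε..T, Real.cos (a*x) / x = ∫ u in a*ε..a*T, Real.cos u / u := by
    have h1 : ∀ x : ℝ, Real.cos (a*x) / x = a * (Real.cos (a*x) / (a*x)) := by
      intro x
      by_cases hx : x = 0
      · simp [hx]
      · field_simp
    simp only [h1]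
    rw [intervalIntegral.integral_const_mul]
    rw [intervalIntegral.integral_comp_mul_left (fun u => Real.cos u / u) (ne_of_gt ha)]
    rw [smul_eq_mul, ← mul_assoc, mul_inv_cancel₀ (ne_of_gt ha), one_mul]
  have add1 : (∫ u in a*ε..ε, Real.cos u / u) + (∫ u in ε..T, Real.cos u / u)
      = ∫ u in a*ε..T, Real.cos u / u :=
    intervalIntegral.integral_add_adjacent_intervals
      (cosdiv_intble (mul_pos ha hε) hε) (cosdiv_intble hε hT)
  have add2 : (∫ u in a*ε..T, Real.cos u / u) + (∫ u in T..a*T, Real.cos u / u)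
      = ∫ u in a*ε..a*T, Real.cos u / u :=
    intervalIntegral.integral_add_adjacent_intervals
      (cosdiv_intble (mul_pos ha hε) hT) (cosdiv_intble hT (mul_pos ha hT))
  have symm1 : (∫ u in T..a*T, Real.cos u / u) = -∫ u in a*T..T, Real.cos u / u :=
    intervalIntegral.integral_symm _ _
  rw [step0, step1, ← add2, ← add1, symm1]
  ring

private lemma frullani_tendsto {a : ℝ} (ha : 0 < a) (ha1 : a ≤ 1) :
    Tendsto (fun p : ℝ × ℝ => ∫ x in p.1..p.2, (Real.cos (a*x) - Real.cos x) / x)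
      ((𝓝[>] (0:ℝ)) ×ˢ atTop) (𝓝 (-Real.log a)) := by
  have h1 : Tendsto (fun p : ℝ × ℝ => ∫ u in a*p.1..p.1, Real.cos u / u)
      ((𝓝[>] (0:ℝ)) ×ˢ atTop) (𝓝 (-Real.log a)) :=
    (seg_eps ha ha1).comp tendsto_fst
  have h2 : Tendsto (fun p : ℝ × ℝ => ∫ u in a*p.2..p.2, Real.cos u / u)
      ((𝓝[>] (0:ℝ)) ×ˢ atTop) (𝓝 0) :=
    (seg_T ha ha1).comp tendsto_snd
  have h3 := h1.sub h2
  rw [sub_zero] at h3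
  apply h3.congr'
  filter_upwards [Filter.prod_mem_prod self_mem_nhdsWithin (eventually_gt_atTop 0)]
    with p hp
  exact (frullani_decomp ha hp.1 hp.2).symm

private lemma frullani_bound {a ε T : ℝ} (ha : 0 < a) (ha1 : a ≤ 1) (hε : 0 < ε) (hT : 0 < T) :
    |∫ x in ε..T, (Real.cos (a*x) - Real.cos x) / x| ≤ 2 * (-Real.log a) := by
  rw [frullani_decomp ha hε hT]
  calc |(∫ u in a*ε..ε, Real.cos u / u) - (∫ u in a*T..T, Real.cos u / u)|
      ≤ |∫ u in a*ε..ε, Real.cos u / u| + |∫ u in a*T..T, Real.cos u / u| := abs_sub _ _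
    _ ≤ -Real.log a + -Real.log a := add_le_add (seg_bound ha ha1 hε) (seg_bound ha ha1 hT)
    _ = 2 * (-Real.log a) := by ring

private lemma inner_subst {α x : ℝ} (hx : 0 < x) :
    (1/x) * ∫ y in (0:ℝ)..x, (Real.cos (x - α*y) - Real.cos x) / y
      = ∫ t in (0:ℝ)..1, (Real.cos ((1-α*t)*x) - Real.cos x) / (t*x) := by
  have hx0 : x ≠ 0 := ne_of_gt hx
  have h := intervalIntegral.integral_comp_mul_right
    (fun y => (Real.cos (x - α*y) - Real.cos x) / y) hx0 (a := 0) (b := 1)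
  simp only [zero_mul, one_mul] at h
  rw [smul_eq_mul] at h
  have h2 : (fun t : ℝ => (Real.cos (x - α*(t*x)) - Real.cos x) / (t*x))
      = fun t : ℝ => (Real.cos ((1-α*t)*x) - Real.cos x) / (t*x) := by
    funext t
    congr 2
    ring_nf
  rw [h2] at h
  rw [h, one_div]

private lemma fubini_step {α ε T : ℝ} (hα0 : 0 ≤ α) (hα1 : α ≤ 1) (hε : 0 < ε) (hεT : ε ≤ T) :
    ∫ x in ε..T, ∫ t in (0:ℝ)..1, (Real.cos ((1-α*t)*x) - Real.cos x) / (t*x)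
      = ∫ t in (0:ℝ)..1, (1/t) * ∫ x in ε..T, (Real.cos ((1-α*t)*x) - Real.cos x) / x := by
  have h01 : (0:ℝ) ≤ 1 := zero_le_one
  have fin1 : IsFiniteMeasure (volume.restrict (Ioc ε T)) :=
    ⟨by rw [Measure.restrict_apply_univ]; exact measure_Ioc_lt_top⟩
  have fin2 : IsFiniteMeasure (volume.restrict (Ioc (0:ℝ) 1)) :=
    ⟨by rw [Measure.restrict_apply_univ]; exact measure_Ioc_lt_top⟩
  have hmeas : Measurable (Function.uncurry fun x t : ℝ =>
      (Real.cos ((1-α*t)*x) - Real.cos x) / (t*x)) := by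
    apply Measurable.div
    · apply Measurable.sub
      · exact (Real.continuous_cos.comp ((continuous_const.sub
          (continuous_const.mul continuous_snd)).mul continuous_fst)).measurable
      · exact (Real.continuous_cos.comp continuous_fst).measurable
    · exact (continuous_snd.mul continuous_fst).measurable
  have hbound : ∀ᵐ p ∂((volume.restrict (Ioc ε T)).prod (volume.restrict (Ioc (0:ℝ) 1))),
      ‖(Function.uncurry fun x t : ℝ => (Real.cos ((1-α*t)*x) - Real.cos x) / (t*x)) p‖
        ≤ (1:ℝ) := by
    rw [Measure.prod_restrict]
    rw [ae_restrict_iff' (measurableSet_Ioc.prod measurableSet_Ioc)]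
    filter_upwards with p hp
    obtain ⟨hx, ht⟩ := hp
    set x := p.1; set t := p.2
    have hx0 : 0 < x := hε.trans_le hx.1.le
    have ht0 : 0 < t := ht.1
    have hnum : |Real.cos ((1-α*t)*x) - Real.cos x| ≤ α * t * x := by
      calc |Real.cos ((1-α*t)*x) - Real.cos x| ≤ |(1-α*t)*x - x| := cos_lip _ _
        _ = α * t * x := by
            rw [show (1-α*t)*x - x = -(α*t*x) by ring, abs_neg, abs_of_nonneg (by positivity)]
    rw [Function.uncurry]
    simp only [Real.norm_eq_abs, abs_div]
    rw [abs_of_pos (by positivity : (0:ℝ) < t * x)]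
    rw [div_le_one (by positivity)]
    calc |Real.cos ((1-α*t)*x) - Real.cos x| ≤ α * t * x := hnum
      _ ≤ t * x := by nlinarith [mul_nonneg (mul_nonneg (sub_nonneg.2 hα1) ht0.le) hx0.le]
  have hint : Integrable (Function.uncurry fun x t : ℝ =>
      (Real.cos ((1-α*t)*x) - Real.cos x) / (t*x))
      ((volume.restrict (Ioc ε T)).prod (volume.restrict (Ioc (0:ℝ) 1))) :=
    (integrable_const (1:ℝ)).mono' hmeas.aestronglyMeasurable hbound
  have hswap := MeasureTheory.integral_integral_swap hint
  rw [intervalIntegral.integral_of_le hεT, intervalIntegral.integral_of_le h01]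
  calc ∫ x in Ioc ε T, ∫ t in (0:ℝ)..1, (Real.cos ((1-α*t)*x) - Real.cos x) / (t*x)
      = ∫ x in Ioc ε T, ∫ t in Ioc (0:ℝ) 1, (Real.cos ((1-α*t)*x) - Real.cos x) / (t*x) := by
        apply setIntegral_congr_fun measurableSet_Ioc
        intro x _
        exact intervalIntegral.integral_of_le h01
    _ = ∫ t in Ioc (0:ℝ) 1, ∫ x in Ioc ε T, (Real.cos ((1-α*t)*x) - Real.cos x) / (t*x) := hswap
    _ = ∫ t in Ioc (0:ℝ) 1, (1/t) * ∫ x in ε..T, (Real.cos ((1-α*t)*x) - Real.cos x) / x := by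
        apply setIntegral_congr_fun measurableSet_Ioc
        intro t _
        dsimp only
        rw [intervalIntegral.integral_of_le hεT]
        rw [← MeasureTheory.integral_const_mul]
        congr 1
        funext x
        rw [div_mul_eq_div_div_swap, one_div, inv_mul_eq_div]

private lemma log_bound {u : ℝ} (h0 : 0 ≤ u) (h1 : u < 1) :
    -Real.log (1-u) ≤ 2 * (1-u) ^ (-(1/2) : ℝ) := by
  have hu : 0 < 1 - u := by linarith
  have h2 : Real.log ((1-u) ^ (-(1/2) : ℝ)) = -(1/2) * Real.log (1-u) :=
    Real.log_rpow hu _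
  have h3 : Real.log ((1-u) ^ (-(1/2) : ℝ)) ≤ (1-u) ^ (-(1/2) : ℝ) - 1 :=
    Real.log_le_sub_one_of_pos (Real.rpow_pos_of_pos hu _)
  have h4 : (0:ℝ) < (1-u) ^ (-(1/2) : ℝ) := Real.rpow_pos_of_pos hu _
  nlinarith [h2 ▸ h3]

private lemma log_bound2 {u : ℝ} (h0 : 0 ≤ u) (h1 : u < 1) :
    -Real.log (1-u) ≤ u / (1-u) := by
  have hu : 0 < 1 - u := by linarith
  have h3 : Real.log (1-u)⁻¹ ≤ (1-u)⁻¹ - 1 :=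
    Real.log_le_sub_one_of_pos (by positivity)
  rw [Real.log_inv] at h3
  have : (1-u)⁻¹ - 1 = u / (1-u) := by field_simp; ring
  linarith [this ▸ h3]

private lemma phi_bound {α t : ℝ} (hα0 : 0 ≤ α) (hα1 : α ≤ 1) (ht0 : 0 < t) (ht1 : t < 1) :
    (1/t) * (2 * -Real.log (1-α*t)) ≤ 8 * (1-t) ^ (-(1/2) : ℝ) := by
  have hu0 : 0 ≤ α * t := by positivity
  have hut : α * t ≤ t := by nlinarith
  have hu1 : α * t < 1 := lt_of_le_of_lt hut ht1
  have h1t : 0 < 1 - t := by linarith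
  have hrpow1 : (1:ℝ) ≤ (1-t) ^ (-(1/2) : ℝ) :=
    Real.one_le_rpow_of_pos_of_le_one_of_nonpos h1t (by linarith) (by norm_num)
  have hlognn : 0 ≤ -Real.log (1-α*t) := by
    rw [neg_nonneg]
    exact Real.log_nonpos (by linarith) (by linarith)
  rcases le_or_gt (1/2 : ℝ) t with h | h
  · -- t ≥ 1/2
    have h2t : 1/t ≤ 2 := by
      rw [div_le_iff₀ ht0]; linarith
    have hmono : (1-α*t) ^ (-(1/2) : ℝ) ≤ (1-t) ^ (-(1/2) : ℝ) :=
      Real.rpow_le_rpow_of_nonpos h1t (by linarith) (by norm_num)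
    have hl := (log_bound hu0 hu1).trans (by linarith : 2 * (1-α*t) ^ (-(1/2) : ℝ) ≤ 2 * (1-t) ^ (-(1/2) : ℝ))
    calc (1/t) * (2 * -Real.log (1-α*t)) ≤ 2 * (2 * (2 * (1-t) ^ (-(1/2) : ℝ))) := by
          nlinarith
      _ = 8 * (1-t) ^ (-(1/2) : ℝ) := by ring
  · -- t < 1/2
    have hl := log_bound2 hu0 hu1
    have h5 : 1 - α*t > 1/2 := by nlinarith
    have h6 : α * t / (1-α*t) ≤ 2 * t := by
      rw [div_le_iff₀ (by linarith)]
      nlinarith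
    have h7 : (1/t) * (2 * -Real.log (1-α*t)) ≤ (1/t) * (2 * (2*t)) := by
      apply mul_le_mul_of_nonneg_left _ (by positivity)
      have := hl.trans h6
      linarith
    have h8 : (1/t) * (2 * (2*t)) = 4 := by field_simp; ring
    calc (1/t) * (2 * -Real.log (1-α*t)) ≤ 4 := h7.trans_eq h8
      _ ≤ 8 * (1-t) ^ (-(1/2) : ℝ) := by nlinarith

private lemma bound_intble :
    IntervalIntegrable (fun t : ℝ => 8 * (1-t) ^ (-(1/2) : ℝ)) volume 0 1 := by
  have h1 : IntervalIntegrable (fun t : ℝ => t ^ (-(1/2) : ℝ)) volume 0 1 :=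
    intervalIntegral.intervalIntegrable_rpow' (by norm_num)
  have h2 := (h1.comp_sub_left 1)
  simp only [sub_self, sub_zero] at h2
  exact (h2.const_mul 8).symm

private lemma series_eval {α : ℝ} (hα0 : 0 ≤ α) (hα1 : α ≤ 1) :
    ∫ t in (0:ℝ)..1, (1/t) * (-Real.log (1 - α*t))
      = ∑' k : ℕ, α ^ (k + 1) / ((k : ℝ) + 1) ^ 2 := by
  set μ := volume.restrict (Ioc (0:ℝ) 1)
  set F : ℕ → ℝ → ℝ := fun k t => α ^ (k+1) * t ^ k / ((k : ℝ) + 1) with hF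
  have hFint : ∀ k, Integrable (F k) μ := by
    intro k
    apply Continuous.integrableOn_Ioc
    fun_prop
  have hFval : ∀ k, ∫ t, F k t ∂μ = α ^ (k+1) / ((k : ℝ) + 1) ^ 2 := by
    intro k
    have h1 : ∫ t, F k t ∂μ = (α ^ (k+1) / ((k : ℝ) + 1)) * ∫ t in Ioc (0:ℝ) 1, t ^ k := by
      rw [← MeasureTheory.integral_const_mul]
      congr 1
      funext t
      rw [hF]
      ring
    have h2 : ∫ t in Ioc (0:ℝ) 1, (t:ℝ) ^ k = 1 / ((k:ℝ)+1) := by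
      rw [← intervalIntegral.integral_of_le zero_le_one, integral_pow]
      simp
    rw [h1, h2, div_mul_div_comm, mul_one, sq]
  have hFnonneg : ∀ k, ∀ t ∈ Ioc (0:ℝ) 1, 0 ≤ F k t := by
    intro k t ht
    have := ht.1
    rw [hF]
    positivity
  have hFnorm : ∀ k, ∫ t, ‖F k t‖ ∂μ = α ^ (k+1) / ((k : ℝ) + 1) ^ 2 := by
    intro k
    rw [← hFval k]
    apply MeasureTheory.integral_congr_ae
    have : ∀ᵐ t ∂μ, t ∈ Ioc (0:ℝ) 1 := ae_restrict_mem measurableSet_Ioc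
    filter_upwards [this] with t ht
    rw [Real.norm_eq_abs, abs_of_nonneg (hFnonneg k t ht)]
  have hs0 : Summable (fun k : ℕ => 1 / ((k : ℝ) + 1) ^ 2) := by
    have h := (summable_nat_add_iff (f := fun n : ℕ => 1 / (n:ℝ) ^ 2) 1).mpr
      (Real.summable_one_div_nat_pow.2 one_lt_two)
    apply h.congr
    intro n
    push_cast
    ring
  have hsummable : Summable (fun k : ℕ => α ^ (k+1) / ((k : ℝ) + 1) ^ 2) := by
    apply Summable.of_nonneg_of_le (fun k => by positivity) (fun k => ?_) hs0
    gcongr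
    · exact pow_le_one₀ hα0 hα1
  have hsumnorm : Summable (fun k : ℕ => ∫ t, ‖F k t‖ ∂μ) := by
    apply hsummable.congr
    intro k
    rw [hFnorm k]
  have hkey := MeasureTheory.hasSum_integral_of_summable_integral_norm hFint hsumnorm
  have hae : ∀ᵐ t ∂μ, (∑' k, F k t) = (1/t) * (-Real.log (1 - α*t)) := by
    have hne : ∀ᵐ t ∂μ, t ≠ (1:ℝ) := by
      apply ae_restrict_of_ae
      rw [ae_iff]
      simp only [ne_eq, not_not]
      have : {a : ℝ | a = 1} = {(1:ℝ)} := by ext t; simp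
      rw [this]
      exact measure_singleton 1
    have hmem : ∀ᵐ t ∂μ, t ∈ Ioc (0:ℝ) 1 := ae_restrict_mem measurableSet_Ioc
    filter_upwards [hne, hmem] with t ht1 htm
    have ht0 : 0 < t := htm.1
    have htlt : t < 1 := lt_of_le_of_ne htm.2 ht1
    have habs : |α * t| < 1 := by
      rw [abs_of_nonneg (by positivity)]
      nlinarith
    have hsum := Real.hasSum_pow_div_log_of_abs_lt_one habs
    have hsum2 := hsum.mul_left (1/t)
    have heq : (fun n : ℕ => (1/t) * ((α*t) ^ (n+1) / ((n:ℝ)+1))) = fun n => F n t := by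
      funext n
      rw [hF]
      have htne : t ≠ 0 := ne_of_gt ht0
      field_simp
      ring
    rw [heq] at hsum2
    exact hsum2.tsum_eq ▸ hsum2.tsum_eq
  rw [intervalIntegral.integral_of_le zero_le_one]
  have h1 : ∫ t in Ioc (0:ℝ) 1, (1/t) * (-Real.log (1 - α*t))
      = ∫ t, (∑' k, F k t) ∂μ :=
    (MeasureTheory.integral_congr_ae hae).symm
  rw [h1, ← hkey.tsum_eq]
  congr 1
  funext k
  exact hFval k

/-- For every `α` with `0 ≤ α ≤ 1`, the iterated improper integral
`∫₀^{∞} (dx/x) ∫₀^{x} (dy/y) [cos(x − αy) − cos x]`,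
understood as the limit `ε → 0⁺`, `T → ∞` of the corresponding proper
integrals, converges and equals the dilogarithm
`Li₂(α) = ∑_{k=1}^{∞} αᵏ/k²`. -/
theorem Itilde_eq_dilog (α : ℝ) (hα : α ∈ Set.Icc (0 : ℝ) 1) :
    Tendsto (fun p : ℝ × ℝ =>
        ∫ x in p.1..p.2, (1 / x) *
          ∫ y in (0 : ℝ)..x, (Real.cos (x - α * y) - Real.cos x) / y)
      ((𝓝[>] (0 : ℝ)) ×ˢ atTop)
      (𝓝 (∑' k : ℕ, α ^ (k + 1) / ((k : ℝ) + 1) ^ 2)) := by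
  obtain ⟨hα0, hα1⟩ := hα
  set l := (𝓝[>] (0:ℝ)) ×ˢ (atTop : Filter ℝ) with hl
  have h1 : ∀ᶠ ε in 𝓝[>] (0:ℝ), 0 < ε ∧ ε < 1 := by
    filter_upwards [self_mem_nhdsWithin,
      mem_nhdsWithin_of_mem_nhds (Iio_mem_nhds one_pos)] with ε hε hε1
    exact ⟨hε, hε1⟩
  have hev : ∀ᶠ p : ℝ × ℝ in l, (0 < p.1 ∧ p.1 < 1) ∧ 1 ≤ p.2 := by
    filter_upwards [Filter.prod_mem_prod h1 (eventually_ge_atTop (1:ℝ))] with p hp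
    exact ⟨hp.1, hp.2⟩
  have hne : ∀ᵐ t : ℝ ∂volume, t ≠ (1:ℝ) := by
    rw [ae_iff]
    simp only [ne_eq, not_not]
    have : {a : ℝ | a = 1} = {(1:ℝ)} := by ext t; simp
    rw [this]
    exact measure_singleton 1
  have hIoc : Set.uIoc (0:ℝ) 1 = Ioc (0:ℝ) 1 := Set.uIoc_of_le zero_le_one
  -- dominated convergence for the t-integral
  have hdct : Tendsto
      (fun p : ℝ × ℝ => ∫ t in (0:ℝ)..1,
        (1/t) * ∫ x in p.1..p.2, (Real.cos ((1-α*t)*x) - Real.cos x) / x) l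
      (𝓝 (∫ t in (0:ℝ)..1, (1/t) * (-Real.log (1 - α*t)))) := by
    apply intervalIntegral.tendsto_integral_filter_of_dominated_convergence
      (fun t : ℝ => 8 * (1-t) ^ (-(1/2) : ℝ))
    · -- measurability
      filter_upwards [hev] with p hp
      have hab : p.1 ≤ p.2 := (hp.1.2.le).trans hp.2
      have heq : (fun t => (1/t) * ∫ x in p.1..p.2, (Real.cos ((1-α*t)*x) - Real.cos x) / x)
          = fun t => (1/t) * ∫ x in Ioc p.1 p.2, (Real.cos ((1-α*t)*x) - Real.cos x) / x := by
        funext t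
        rw [intervalIntegral.integral_of_le hab]
      rw [heq]
      apply Measurable.aestronglyMeasurable
      apply Measurable.mul
      · exact measurable_const.div measurable_id
      · have hsm : StronglyMeasurable (Function.uncurry fun t x : ℝ =>
            (Real.cos ((1-α*t)*x) - Real.cos x) / x) := by
          apply Measurable.stronglyMeasurable
          apply Measurable.div
          · apply Measurable.sub
            · exact (Real.continuous_cos.comp ((continuous_const.sub
                (continuous_const.mul continuous_fst)).mul continuous_snd)).measurable
            · exact (Real.continuous_cos.comp continuous_snd).measurable
          · exact continuous_snd.measurable
        exact (hsm.integral_prod_right).measurable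
    · -- bound
      filter_upwards [hev] with p hp
      filter_upwards [hne] with t ht1 htm
      rw [hIoc] at htm
      have ht0 : 0 < t := htm.1
      have htlt : t < 1 := lt_of_le_of_ne htm.2 ht1
      have ha : 0 < 1 - α*t := by nlinarith
      have ha1 : 1 - α*t ≤ 1 := by nlinarith
      have hp2 : 0 < p.2 := lt_of_lt_of_le one_pos hp.2
      have hb := frullani_bound (ε := p.1) (T := p.2) ha ha1 hp.1.1 hp2
      rw [Real.norm_eq_abs, abs_mul, abs_of_pos (by positivity : (0:ℝ) < 1/t)]
      calc (1/t) * |∫ x in p.1..p.2, (Real.cos ((1-α*t)*x) - Real.cos x) / x|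
          ≤ (1/t) * (2 * -Real.log (1-α*t)) := by
            apply mul_le_mul_of_nonneg_left hb (by positivity)
        _ ≤ 8 * (1-t) ^ (-(1/2) : ℝ) := phi_bound hα0 hα1 ht0 htlt
    · exact bound_intble
    · -- pointwise limit
      filter_upwards [hne] with t ht1 htm
      rw [hIoc] at htm
      have ht0 : 0 < t := htm.1
      have htlt : t < 1 := lt_of_le_of_ne htm.2 ht1
      have ha : 0 < 1 - α*t := by nlinarith
      have ha1 : 1 - α*t ≤ 1 := by nlinarith
      exact (frullani_tendsto ha ha1).const_mul (1/t)
  rw [series_eval hα0 hα1] at hdct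
  apply hdct.congr'
  filter_upwards [hev] with p hp
  have hp1 : 0 < p.1 := hp.1.1
  have hab : p.1 ≤ p.2 := (hp.1.2.le).trans hp.2
  rw [← fubini_step hα0 hα1 hp1 hab]
  apply intervalIntegral.integral_congr
  intro x hx
  have hx0 : 0 < x := by
    have := hx.1
    rw [min_eq_left hab] at this
    exact lt_of_lt_of_le hp1 this
  exact (inner_subst hx0).symm
end

section
/- Let R > 0 and k be real constants, and let a, b : ℝ → ℂ be differentiable functions satisfying the spinor (two-level) system i·a'(s) = −(1/(2R))·e^{−iks²/2}·b(s) and i·b'(s) = −(1/(2R))·e^{iks²/2}·a(s) for all s. Define the real-valued functions x = a·b̄ + b·ā, y = i(a·b̄ − b·ā), z = |a|² − |b|². Then (x, y, z) satisfies the rolling-sphere system: x'(s) = −(1/R)·sin(ks²/2)·z(s), y'(s) = (1/R)·cos(ks²/2)·z(s), z'(s) = (1/R)·(sin(ks²/2)·x(s) − cos(ks²/2)·y(s)). -/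
open Real Complex

private lemma hasDerivAt_conj' {f : ℝ → ℂ} {f' : ℂ} {s : ℝ} (h : HasDerivAt f f' s) :
    HasDerivAt (fun t => (starRingEnd ℂ) (f t)) ((starRingEnd ℂ) f') s := by
  exact (Complex.conjCLE.hasFDerivAt.comp_hasDerivAt s h)

/-- Let `R > 0` and `k` be real constants, and let `a, b : ℝ → ℂ` be
differentiable functions satisfying the two-level (spinor) system
`i·a'(s) = −(1/(2R))·e^{−iks²/2}·b(s)`, `i·b'(s) = −(1/(2R))·e^{iks²/2}·a(s)`.
Then the (real-valued) Hopf-map components `x = ab̄ + bā`,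
`y = i(ab̄ − bā)`, `z = aā − bb̄` satisfy the rolling-sphere system
`x' = −(1/R)·sin(ks²/2)·z`, `y' = (1/R)·cos(ks²/2)·z`,
`z' = (1/R)·(sin(ks²/2)·x − cos(ks²/2)·y)`. -/
theorem hopf_map_rolling_sphere (R k : ℝ) (hR : 0 < R) (a b : ℝ → ℂ)
    (ha : Differentiable ℝ a) (hb : Differentiable ℝ b)
    (heqa : ∀ s : ℝ, Complex.I * deriv a s =
      -(1 / (2 * R)) * Complex.exp (-Complex.I * k * s ^ 2 / 2) * b s)
    (heqb : ∀ s : ℝ, Complex.I * deriv b s =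
      -(1 / (2 * R)) * Complex.exp (Complex.I * k * s ^ 2 / 2) * a s) :
    ∀ s : ℝ,
      (deriv (fun t => a t * (starRingEnd ℂ) (b t) + b t * (starRingEnd ℂ) (a t)) s =
        ((-(1 / R) * Real.sin (k * s ^ 2 / 2) : ℝ) : ℂ) *
          (a s * (starRingEnd ℂ) (a s) - b s * (starRingEnd ℂ) (b s))) ∧
      (deriv (fun t => Complex.I *
          (a t * (starRingEnd ℂ) (b t) - b t * (starRingEnd ℂ) (a t))) s =
        (((1 / R) * Real.cos (k * s ^ 2 / 2) : ℝ) : ℂ) *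
          (a s * (starRingEnd ℂ) (a s) - b s * (starRingEnd ℂ) (b s))) ∧
      (deriv (fun t => a t * (starRingEnd ℂ) (a t) - b t * (starRingEnd ℂ) (b t)) s =
        ((1 / R : ℝ) : ℂ) *
          (((Real.sin (k * s ^ 2 / 2) : ℝ) : ℂ) *
              (a s * (starRingEnd ℂ) (b s) + b s * (starRingEnd ℂ) (a s)) -
            ((Real.cos (k * s ^ 2 / 2) : ℝ) : ℂ) *
              (Complex.I * (a s * (starRingEnd ℂ) (b s) - b s * (starRingEnd ℂ) (a s))))) := by
  intro s
  set θ : ℝ := k * s ^ 2 / 2 with hθ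
  have hRne : (R : ℂ) ≠ 0 := by exact_mod_cast hR.ne'
  -- rewrite the exponentials
  have harg1 : -Complex.I * k * s ^ 2 / 2 = ((-θ : ℝ) : ℂ) * Complex.I := by
    push_cast [hθ]; ring
  have harg2 : Complex.I * k * s ^ 2 / 2 = ((θ : ℝ) : ℂ) * Complex.I := by
    push_cast [hθ]; ring
  have hexp1 : Complex.exp (-Complex.I * k * s ^ 2 / 2) =
      (Real.cos θ : ℂ) - (Real.sin θ : ℂ) * Complex.I := by
    rw [harg1, Complex.exp_mul_I]
    push_cast
    simp [Complex.cos_neg, Complex.sin_neg]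
    ring
  have hexp2 : Complex.exp (Complex.I * k * s ^ 2 / 2) =
      (Real.cos θ : ℂ) + (Real.sin θ : ℂ) * Complex.I := by
    rw [harg2, Complex.exp_mul_I]
    push_cast
    ring
  set C : ℂ := (Real.cos θ : ℂ) with hC
  set S : ℂ := (Real.sin θ : ℂ) with hS
  have hda : deriv a s = -Complex.I * (-(1 / (2 * R)) * (C - S * Complex.I) * b s) := by
    rw [← hexp1]
    linear_combination (-Complex.I) * heqa s + (deriv a s) * Complex.I_mul_I
  have hdb : deriv b s = -Complex.I * (-(1 / (2 * R)) * (C + S * Complex.I) * a s) := by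
    rw [← hexp2]
    linear_combination (-Complex.I) * heqb s + (deriv b s) * Complex.I_mul_I
  have hconjC : (starRingEnd ℂ) C = C := Complex.conj_ofReal _
  have hconjS : (starRingEnd ℂ) S = S := Complex.conj_ofReal _
  have HA : HasDerivAt a (deriv a s) s := (ha s).hasDerivAt
  have HB : HasDerivAt b (deriv b s) s := (hb s).hasDerivAt
  have HCA := hasDerivAt_conj' HA
  have HCB := hasDerivAt_conj' HB
  have hconj_da : (starRingEnd ℂ) (deriv a s) =
      Complex.I * (-(1 / (2 * R)) * (C + S * Complex.I) * (starRingEnd ℂ) (b s)) := by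
    rw [hda]
    simp only [map_mul, map_neg, map_sub, map_add, map_div₀, map_one, map_ofNat,
      Complex.conj_I, Complex.conj_ofReal, hconjC, hconjS]
    ring
  have hconj_db : (starRingEnd ℂ) (deriv b s) =
      Complex.I * (-(1 / (2 * R)) * (C - S * Complex.I) * (starRingEnd ℂ) (a s)) := by
    rw [hdb]
    simp only [map_mul, map_neg, map_sub, map_add, map_div₀, map_one, map_ofNat,
      Complex.conj_I, Complex.conj_ofReal, hconjC, hconjS]
    ring
  set A := a s
  set B := b s
  set A' := (starRingEnd ℂ) (a s)
  set B' := (starRingEnd ℂ) (b s)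
  refine ⟨?_, ?_, ?_⟩
  · have H : HasDerivAt (fun t => a t * (starRingEnd ℂ) (b t) + b t * (starRingEnd ℂ) (a t))
        (deriv a s * B' + A * (starRingEnd ℂ) (deriv b s) +
         (deriv b s * A' + B * (starRingEnd ℂ) (deriv a s))) s :=
      (HA.mul HCB).add (HB.mul HCA)
    rw [H.deriv, hconj_da, hconj_db, hda, hdb]
    simp only [Complex.ofReal_mul, Complex.ofReal_neg, Complex.ofReal_div, Complex.ofReal_one]
    rw [← hS]
    linear_combination (S / R * (A * A' - B * B')) * Complex.I_sq
  · have H : HasDerivAt (fun t => Complex.I *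
        (a t * (starRingEnd ℂ) (b t) - b t * (starRingEnd ℂ) (a t)))
        (Complex.I * (deriv a s * B' + A * (starRingEnd ℂ) (deriv b s) -
         (deriv b s * A' + B * (starRingEnd ℂ) (deriv a s)))) s :=
      (((HA.mul HCB).sub (HB.mul HCA)).const_mul Complex.I)
    rw [H.deriv, hconj_da, hconj_db, hda, hdb]
    simp only [Complex.ofReal_mul, Complex.ofReal_neg, Complex.ofReal_div, Complex.ofReal_one]
    rw [← hC]
    linear_combination (C / R * (B * B' - A * A')) * Complex.I_sq
  · have H : HasDerivAt (fun t => a t * (starRingEnd ℂ) (a t) - b t * (starRingEnd ℂ) (b t))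
        (deriv a s * A' + A * (starRingEnd ℂ) (deriv a s) -
         (deriv b s * B' + B * (starRingEnd ℂ) (deriv b s))) s :=
      (HA.mul HCA).sub (HB.mul HCB)
    rw [H.deriv, hconj_da, hconj_db, hda, hdb]
    simp only [Complex.ofReal_mul, Complex.ofReal_neg, Complex.ofReal_div, Complex.ofReal_one]
    linear_combination (-(S / R) * (A * B' + B * A')) * Complex.I_sq
end
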